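/- arXiv:0804.1300 — 3 statements merged into one kernel-verified Lean document; each statement's English description precedes it below -/
import Mathlib

section
/- Writing D^G = −δ + ∇' + A with ∇' the covariant derivative induced by ∇ on E and A a 1-form valued in fiberwise vector fields on E, the flatness (D^G)² = 0 is equivalent to the equation δA = R^{∇'} + ∇'A + ½[A,A], where ½[A,A](X,Y) = [A(X),A(Y)] and R^{∇'} = −½ R^l_{ijk} dx^i∧dx^j y^k ∂/∂y^l. -/
/- STATEMENT 7: for `D = −δ + ∇' + A`, flatness `D² = 0` is equivalent to
`δA = R^{∇'} + ∇'A + ½[A,A]`.  Model: sections of the jet bundle over (a chart of)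
ℝ^d are functions `s(x,y)`, `A x y i k = A^k_i(x;y)` is a 1-form with values in
fiberwise vector fields, and all operators are written componentwise. -/

noncomputable section
open scoped BigOperators

abbrev E (d : ℕ) := Fin d → ℝ

def pd (d : ℕ) (i : Fin d) (f : E d → ℝ) (x : E d) : ℝ :=
  fderiv ℝ f x (Pi.single i 1)

abbrev Christoffel (d : ℕ) := E d → Fin d → Fin d → Fin d → ℝ

def SmoothChristoffel {d : ℕ} (Γ : Christoffel d) : Prop :=
  ∀ k i j, ContDiff ℝ (⊤ : ℕ∞) (fun x => Γ x k i j)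

def Torsionfree {d : ℕ} (Γ : Christoffel d) : Prop :=
  ∀ x k i j, Γ x k i j = Γ x k j i

/-- curvature tensor `curv Γ x s k l j = R^s_{klj}(x)` -/
def curv {d : ℕ} (Γ : Christoffel d) (x : E d) (s k l j : Fin d) : ℝ :=
  pd d k (fun y => Γ y s l j) x - pd d l (fun y => Γ y s k j) x
    + ∑ t, (Γ x s k t * Γ x t l j - Γ x s l t * Γ x t k j)

/-- partial derivative in the base variable `x` -/
def pdx {d : ℕ} (i : Fin d) (s : E d → E d → ℝ) (x y : E d) : ℝ :=
  deriv (fun t : ℝ => s (x + t • (Pi.single i 1 : E d)) y) 0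

/-- partial derivative in the fiber variable `y` -/
def pdy {d : ℕ} (i : Fin d) (s : E d → E d → ℝ) (x y : E d) : ℝ :=
  deriv (fun t : ℝ => s x (y + t • (Pi.single i 1 : E d))) 0

/-- the `i`-th component of `D = −δ + ∇' + A` -/
def Dop {d : ℕ} (Γ : Christoffel d) (A : E d → E d → Fin d → Fin d → ℝ)
    (i : Fin d) (s : E d → E d → ℝ) : E d → E d → ℝ :=
  fun x y =>
    pdx i s x y - pdy i s x y
      - ∑ j, ∑ k, Γ x k i j * y j * pdy k s x y
      + ∑ k, A x y i k * pdy k s x y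

/-- the `k`-component of `(∇'_i A_j)` as a fiberwise vector field -/
def covA {d : ℕ} (Γ : Christoffel d) (A : E d → E d → Fin d → Fin d → ℝ)
    (i j k : Fin d) (x y : E d) : ℝ :=
  pdx i (fun x' y' => A x' y' j k) x y
    - ∑ m, ∑ l, Γ x m i l * y l * pdy m (fun x' y' => A x' y' j k) x y
    + ∑ m, Γ x k i m * A x y j m

/-! ## Auxiliary machinery -/

variable {d : ℕ}

lemma dir_deriv (F : E d × E d → ℝ) (x y : E d) (v : E d × E d)
    (h : DifferentiableAt ℝ F (x, y)) :
    deriv (fun t : ℝ => F ((x, y) + t • v)) 0 = fderiv ℝ F (x, y) v := by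
  have hc : HasDerivAt (fun t : ℝ => (x, y) + t • v) v 0 := by
    simpa using ((hasDerivAt_id (0:ℝ)).smul_const v).const_add (x, y)
  have h' : HasFDerivAt F (fderiv ℝ F (x, y)) ((x, y) + (0:ℝ) • v) := by
    simpa using h.hasFDerivAt
  simpa [Function.comp_def] using (h'.comp_hasDerivAt 0 hc).deriv

lemma pdx_eq (i : Fin d) (s : E d → E d → ℝ) (x y : E d)
    (h : DifferentiableAt ℝ (fun p : E d × E d => s p.1 p.2) (x, y)) :
    pdx i s x y = fderiv ℝ (fun p : E d × E d => s p.1 p.2) (x, y) ((Pi.single i 1 : E d), (0 : E d)) := by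
  rw [← dir_deriv _ x y _ h, pdx]
  congr 1; funext t; simp

lemma pdy_eq (i : Fin d) (s : E d → E d → ℝ) (x y : E d)
    (h : DifferentiableAt ℝ (fun p : E d × E d => s p.1 p.2) (x, y)) :
    pdy i s x y = fderiv ℝ (fun p : E d × E d => s p.1 p.2) (x, y) ((0 : E d), (Pi.single i 1 : E d)) := by
  rw [← dir_deriv _ x y _ h, pdy]
  congr 1; funext t; simp

/-- a CLM on a product of pi types, decomposed -/
lemma clm_decomp (L : (E d × E d) →L[ℝ] ℝ) (a b : E d) :
    L (a, b) = (∑ k, a k * L ((Pi.single k 1 : E d), (0 : E d)))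
      + ∑ k, b k * L ((0 : E d), (Pi.single k 1 : E d)) := by
  have ha : a = ∑ k, a k • (Pi.single k (1:ℝ) : E d) := by
    ext l; simp [Pi.single_apply]
  have hb : b = ∑ k, b k • (Pi.single k (1:ℝ) : E d) := by
    ext l; simp [Pi.single_apply]
  have : (a, b) = (∑ k, a k • (((Pi.single k 1 : E d), (0 : E d)) : E d × E d))
      + ∑ k, b k • (((0 : E d), (Pi.single k 1 : E d)) : E d × E d) := by
    rw [Prod.ext_iff]
    constructor
    · simp only [Prod.fst_add, Prod.fst_sum, Prod.smul_fst, smul_zero]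
      simpa using ha
    · simp only [Prod.snd_add, Prod.snd_sum, Prod.smul_snd, smul_zero]
      simpa using hb
  rw [this]
  rw [map_add, map_sum, map_sum]
  congr 1 <;> exact Finset.sum_congr rfl fun k _ => by rw [map_smul]; rfl

lemma bracket (F : E d × E d → ℝ) (hF : ContDiff ℝ (⊤ : ℕ∞) F)
    (V W : E d × E d → E d × E d) (hV : Differentiable ℝ V) (hW : Differentiable ℝ W)
    (p : E d × E d) :
    fderiv ℝ (fun q => fderiv ℝ F q (V q)) p (W p)
      - fderiv ℝ (fun q => fderiv ℝ F q (W q)) p (V p)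
    = fderiv ℝ F p (fderiv ℝ V p (W p) - fderiv ℝ W p (V p)) := by
  have hdF : ContDiff ℝ (⊤ : ℕ∞) (fderiv ℝ F) := hF.fderiv_right (by simp)
  have h1 : DifferentiableAt ℝ (fderiv ℝ F) p := (hdF.differentiable (by simp)) p
  have symm : fderiv ℝ (fderiv ℝ F) p (W p) (V p) = fderiv ℝ (fderiv ℝ F) p (V p) (W p) :=
    (hF.contDiffAt.isSymmSndFDerivAt (by rw [minSmoothness_of_isRCLikeNormedField]; exact WithTop.coe_le_coe.mpr (le_top : (2 : ℕ∞) ≤ ⊤))) _ _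
  rw [fderiv_clm_apply h1 (hV p), fderiv_clm_apply h1 (hW p)]
  simp only [ContinuousLinearMap.add_apply, ContinuousLinearMap.comp_apply,
    ContinuousLinearMap.flip_apply, map_sub]
  rw [symm]
  ring

def Vf (Γ : Christoffel d) (A : E d → E d → Fin d → Fin d → ℝ) (i : Fin d)
    (p : E d × E d) : E d × E d :=
  ((Pi.single i 1 : E d),
   fun k => -((Pi.single i 1 : E d) k) - (∑ j, Γ p.1 k i j * p.2 j) + A p.1 p.2 i k)

lemma contDiff_Vf {Γ : Christoffel d} {A : E d → E d → Fin d → Fin d → ℝ}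
    (hΓ : SmoothChristoffel Γ) (hA : ∀ i k, ContDiff ℝ (⊤ : ℕ∞) (fun p : E d × E d => A p.1 p.2 i k))
    (i : Fin d) : ContDiff ℝ (⊤ : ℕ∞) (Vf Γ A i) := by
  unfold Vf
  apply ContDiff.prodMk contDiff_const
  apply contDiff_pi.2
  intro k
  apply ContDiff.add _ (hA i k)
  apply ContDiff.sub contDiff_const
  have h2 : ∀ j : Fin d, ContDiff ℝ (⊤ : ℕ∞) (fun q : E d × E d => q.2 j) := fun j =>
    ContinuousLinearMap.contDiff
      ((ContinuousLinearMap.proj j).comp (ContinuousLinearMap.snd ℝ (E d) (E d)))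
  exact ContDiff.sum fun j _ => ((hΓ k i j).comp contDiff_fst).mul (h2 j)

lemma Dop_eq (Γ : Christoffel d) (A : E d → E d → Fin d → Fin d → ℝ) (i : Fin d)
    (s : E d → E d → ℝ) (x y : E d)
    (h : DifferentiableAt ℝ (fun p : E d × E d => s p.1 p.2) (x, y)) :
    Dop Γ A i s x y = fderiv ℝ (fun p : E d × E d => s p.1 p.2) (x, y) (Vf Γ A i (x, y)) := by
  set L := fderiv ℝ (fun p : E d × E d => s p.1 p.2) (x, y) with hL
  rw [Dop]
  simp only [pdx_eq _ _ _ _ h, pdy_eq _ _ _ _ h, ← hL]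
  rw [Vf]
  conv_rhs => rw [clm_decomp]
  have e1 : ∀ c : Fin d → ℝ, (∑ k, (Pi.single i 1 : E d) k * c k) = c i := by
    intro c; simp [Pi.single_apply]
  simp only [sub_mul, add_mul, neg_mul, Finset.sum_add_distrib, Finset.sum_sub_distrib,
    Finset.sum_mul, Finset.sum_neg_distrib]
  simp only [e1]
  conv_rhs => rw [Finset.sum_comm]
  ring

lemma fderiv_comp_clm {G : Type*} [NormedAddCommGroup G] [NormedSpace ℝ G]
    (V : E d × E d → E d × E d) (p v : E d × E d)
    (hV : DifferentiableAt ℝ V p) (L : (E d × E d) →L[ℝ] G) :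
    fderiv ℝ (fun q => L (V q)) p v = L (fderiv ℝ V p v) := by
  have h : fderiv ℝ (⇑L ∘ V) p = (fderiv ℝ (⇑L) (V p)).comp (fderiv ℝ V p) :=
    fderiv_comp p L.differentiableAt hV
  rw [L.fderiv] at h
  have : (fun q => L (V q)) = ⇑L ∘ V := rfl
  rw [this, h]; rfl

lemma comp_fst_hasFDerivAt (f : E d → ℝ) (p : E d × E d) (hf : DifferentiableAt ℝ f p.1) :
    HasFDerivAt (fun q : E d × E d => f q.1)
      ((fderiv ℝ f p.1).comp (ContinuousLinearMap.fst ℝ (E d) (E d))) p := by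
  exact hf.hasFDerivAt.comp p hasFDerivAt_fst

lemma fderiv_Vf_fst {Γ : Christoffel d} {A : E d → E d → Fin d → Fin d → ℝ}
    (hΓ : SmoothChristoffel Γ) (hA : ∀ i k, ContDiff ℝ (⊤ : ℕ∞) (fun p : E d × E d => A p.1 p.2 i k))
    (j : Fin d) (p v : E d × E d) :
    (fderiv ℝ (Vf Γ A j) p v).1 = 0 := by
  have hdV : DifferentiableAt ℝ (Vf Γ A j) p :=
    ((contDiff_Vf hΓ hA j).differentiable (by simp)) p
  have h := fderiv_comp_clm (Vf Γ A j) p v hdV (ContinuousLinearMap.fst ℝ (E d) (E d))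
  have h2 : (fun q => (ContinuousLinearMap.fst ℝ (E d) (E d)) (Vf Γ A j q))
      = fun _ : E d × E d => (Pi.single j 1 : E d) := rfl
  rw [h2] at h
  have h3 : fderiv ℝ (fun _ : E d × E d => (Pi.single j 1 : E d)) p v = 0 := by
    simp
  rw [h3] at h
  simpa using h.symm

lemma fderiv_Vf_snd {Γ : Christoffel d} {A : E d → E d → Fin d → Fin d → ℝ}
    (hΓ : SmoothChristoffel Γ) (hA : ∀ i k, ContDiff ℝ (⊤ : ℕ∞) (fun p : E d × E d => A p.1 p.2 i k))
    (j k : Fin d) (p v : E d × E d) :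
    (fderiv ℝ (Vf Γ A j) p v).2 k =
      -(∑ l, (fderiv ℝ (fun x' => Γ x' k j l) p.1 v.1 * p.2 l + Γ p.1 k j l * v.2 l))
        + fderiv ℝ (fun q : E d × E d => A q.1 q.2 j k) p v := by
  have hdV : DifferentiableAt ℝ (Vf Γ A j) p :=
    ((contDiff_Vf hΓ hA j).differentiable (by simp)) p
  have h := fderiv_comp_clm (Vf Γ A j) p v hdV
    ((ContinuousLinearMap.proj k).comp (ContinuousLinearMap.snd ℝ (E d) (E d)))
  have h2 : (fun q => ((ContinuousLinearMap.proj k).comp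
        (ContinuousLinearMap.snd ℝ (E d) (E d))) (Vf Γ A j q))
      = fun q : E d × E d =>
        -((Pi.single j 1 : E d) k) - (∑ l, Γ q.1 k j l * q.2 l) + A q.1 q.2 j k := rfl
  rw [h2] at h
  have hg : ∀ l : Fin d, HasFDerivAt (fun q : E d × E d => Γ q.1 k j l)
      ((fderiv ℝ (fun x' => Γ x' k j l) p.1).comp (ContinuousLinearMap.fst ℝ (E d) (E d))) p :=
    fun l => comp_fst_hasFDerivAt _ p (((hΓ k j l).differentiable (by simp)) p.1)
  have hyl : ∀ l : Fin d, HasFDerivAt (fun q : E d × E d => q.2 l)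
      ((ContinuousLinearMap.proj l).comp (ContinuousLinearMap.snd ℝ (E d) (E d))) p :=
    fun l => ((ContinuousLinearMap.proj l).comp
      (ContinuousLinearMap.snd ℝ (E d) (E d))).hasFDerivAt
  have hAk : HasFDerivAt (fun q : E d × E d => A q.1 q.2 j k)
      (fderiv ℝ (fun q : E d × E d => A q.1 q.2 j k) p) p :=
    (((hA j k).differentiable (by simp)) p).hasFDerivAt
  have hcomp : HasFDerivAt (fun q : E d × E d =>
      -((Pi.single j 1 : E d) k) - (∑ l, Γ q.1 k j l * q.2 l) + A q.1 q.2 j k) _ p :=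
    (((hasFDerivAt_const (-((Pi.single j 1 : E d) k)) p).sub
    (HasFDerivAt.fun_sum (fun l (_ : l ∈ Finset.univ) => (hg l).mul (hyl l)))).add hAk)
  rw [hcomp.fderiv] at h
  simp only [ContinuousLinearMap.comp_apply, ContinuousLinearMap.coe_snd',
    ContinuousLinearMap.proj_apply] at h
  rw [← h]
  simp only [ContinuousLinearMap.add_apply, ContinuousLinearMap.sub_apply,
    ContinuousLinearMap.zero_apply, ContinuousLinearMap.coe_sum', Finset.sum_apply,
    ContinuousLinearMap.smul_apply, ContinuousLinearMap.comp_apply,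
    ContinuousLinearMap.coe_fst', ContinuousLinearMap.coe_snd',
    ContinuousLinearMap.proj_apply, smul_eq_mul]
  rw [zero_sub]
  congr 2
  apply Finset.sum_congr rfl
  intro l _
  ring

lemma comm_eq {Γ : Christoffel d} {A : E d → E d → Fin d → Fin d → ℝ}
    (hΓ : SmoothChristoffel Γ) (hA : ∀ i k, ContDiff ℝ (⊤ : ℕ∞) (fun p : E d × E d => A p.1 p.2 i k))
    (s : E d → E d → ℝ) (hs : ContDiff ℝ (⊤ : ℕ∞) (fun p : E d × E d => s p.1 p.2))
    (i j : Fin d) (x y : E d) :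
    Dop Γ A i (Dop Γ A j s) x y - Dop Γ A j (Dop Γ A i s) x y
      = ∑ k, ((fderiv ℝ (Vf Γ A j) (x, y) (Vf Γ A i (x, y))).2 k
            - (fderiv ℝ (Vf Γ A i) (x, y) (Vf Γ A j (x, y))).2 k) * pdy k s x y := by
  set F := fun p : E d × E d => s p.1 p.2 with hFdef
  have hVd : ∀ i, Differentiable ℝ (Vf Γ A i) := fun i =>
    (contDiff_Vf hΓ hA i).differentiable (by simp)
  have hdF : Differentiable ℝ F := hs.differentiable (by simp)
  have hG : ∀ i, Differentiable ℝ (fun q => fderiv ℝ F q (Vf Γ A i q)) := fun i =>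
    Differentiable.clm_apply ((hs.fderiv_right (m := (⊤ : ℕ∞)) (by simp)).differentiable (by simp)) (hVd i)
  have hfun : ∀ i, (fun p : E d × E d => Dop Γ A i s p.1 p.2)
      = fun q => fderiv ℝ F q (Vf Γ A i q) := by
    intro i; funext q
    exact Dop_eq Γ A i s q.1 q.2 (hdF _)
  have hDD : ∀ i' j', Dop Γ A i' (Dop Γ A j' s) x y
      = fderiv ℝ (fun q => fderiv ℝ F q (Vf Γ A j' q)) (x, y) (Vf Γ A i' (x, y)) := by
    intro i' j'
    rw [Dop_eq Γ A i' (Dop Γ A j' s) x y (by rw [hfun j']; exact (hG j') _)]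
    rw [hfun j']
  rw [hDD i j, hDD j i, bracket F hs (Vf Γ A j) (Vf Γ A i) (hVd j) (hVd i) (x, y)]
  set B := fderiv ℝ (Vf Γ A j) (x, y) (Vf Γ A i (x, y))
    - fderiv ℝ (Vf Γ A i) (x, y) (Vf Γ A j (x, y)) with hBdef
  have hB1 : B.1 = 0 := by
    rw [hBdef, Prod.fst_sub, fderiv_Vf_fst hΓ hA, fderiv_Vf_fst hΓ hA, sub_zero]
  have : fderiv ℝ F (x, y) B = fderiv ℝ F (x, y) (B.1, B.2) := rfl
  rw [this, clm_decomp, hB1]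
  simp only [Pi.zero_apply, zero_mul, Finset.sum_const_zero, zero_add]
  apply Finset.sum_congr rfl
  intro k _
  rw [pdy_eq _ _ _ _ (hdF _), hBdef, Prod.snd_sub]
  rfl

lemma coeff_eq {Γ : Christoffel d} {A : E d → E d → Fin d → Fin d → ℝ}
    (hΓ : SmoothChristoffel Γ) (hT : Torsionfree Γ)
    (hA : ∀ i k, ContDiff ℝ (⊤ : ℕ∞) (fun p : E d × E d => A p.1 p.2 i k))
    (i j k : Fin d) (x y : E d) :
    (fderiv ℝ (Vf Γ A j) (x, y) (Vf Γ A i (x, y))).2 k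
      - (fderiv ℝ (Vf Γ A i) (x, y) (Vf Γ A j (x, y))).2 k
    = ((- ∑ l, curv Γ x k i j l * y l)
        + (covA Γ A i j k x y - covA Γ A j i k x y)
        + ∑ m, (A x y i m * pdy m (fun x' y' => A x' y' j k) x y
                - A x y j m * pdy m (fun x' y' => A x' y' i k) x y))
      - (pdy i (fun x' y' => A x' y' j k) x y - pdy j (fun x' y' => A x' y' i k) x y) := by
  have hAd : ∀ (a b : Fin d), DifferentiableAt ℝ (fun q : E d × E d => A q.1 q.2 a b) (x, y) :=
    fun a b => ((hA a b).differentiable (by simp)) _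
  have hA_dir : ∀ (a b : Fin d) (v : E d × E d),
      fderiv ℝ (fun q : E d × E d => A q.1 q.2 a b) (x, y) v
        = (∑ m, v.1 m * pdx m (fun x' y' => A x' y' a b) x y)
          + ∑ m, v.2 m * pdy m (fun x' y' => A x' y' a b) x y := by
    intro a b v
    have hv : v = (v.1, v.2) := rfl
    rw [hv, clm_decomp]
    congr 1
    · exact Finset.sum_congr rfl fun m _ => by
        rw [pdx_eq m (fun x' y' => A x' y' a b) x y (hAd a b)]
    · exact Finset.sum_congr rfl fun m _ => by
        rw [pdy_eq m (fun x' y' => A x' y' a b) x y (hAd a b)]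
  rw [fderiv_Vf_snd hΓ hA j k, fderiv_Vf_snd hΓ hA i k, hA_dir, hA_dir]
  have e1 : ∀ (i' : Fin d) (c : Fin d → ℝ), (∑ m, (Pi.single i' 1 : E d) m * c m) = c i' := by
    intro i' c; simp [Pi.single_apply]
  have e1' : ∀ (i' : Fin d) (c : Fin d → ℝ), (∑ m, c m * (Pi.single i' 1 : E d) m) = c i' := by
    intro i' c; simp [Pi.single_apply]
  simp only [Vf, curv, covA, pd]
  simp only [mul_add, mul_sub, add_mul, sub_mul, neg_mul, mul_neg, neg_neg,
    Finset.sum_add_distrib, Finset.sum_sub_distrib, Finset.sum_neg_distrib,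
    Finset.mul_sum, Finset.sum_mul, e1, e1']
  rw [hT x k j i]
  have c1 : ∀ a b : Fin d, (∑ l : Fin d, ∑ m : Fin d, Γ x k a l * (Γ x l b m * y m))
      = ∑ m : Fin d, ∑ l : Fin d, Γ x k a l * Γ x l b m * y m := by
    intro a b
    rw [Finset.sum_comm]
    exact Finset.sum_congr rfl fun m _ => Finset.sum_congr rfl fun l _ => by ring
  rw [c1 j i, c1 i j]
  ring

lemma pdy_coord (m k : Fin d) (x y : E d) :
    pdy m (fun _ y' => y' k) x y = (Pi.single m 1 : E d) k := by
  rw [pdy]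
  have h : (fun t : ℝ => (y + t • (Pi.single m 1 : E d)) k)
      = fun t : ℝ => y k + t * (Pi.single m 1 : E d) k := by
    funext t; simp
  rw [h]
  set_option linter.unnecessarySimpa false in
  simpa using (((hasDerivAt_id (0:ℝ)).mul_const _).const_add (y k)).deriv

theorem flatness_iff_A_equation
    (d : ℕ) (Γ : Christoffel d) (hΓ : SmoothChristoffel Γ) (hT : Torsionfree Γ)
    (A : E d → E d → Fin d → Fin d → ℝ)
    (hA : ∀ i k, ContDiff ℝ (⊤ : ℕ∞) (fun p : E d × E d => A p.1 p.2 i k)) :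
    -- D² = 0 on all smooth sections
    (∀ s : E d → E d → ℝ, ContDiff ℝ (⊤ : ℕ∞) (fun p : E d × E d => s p.1 p.2) →
      ∀ (i j : Fin d) (x y : E d),
        Dop Γ A i (Dop Γ A j s) x y = Dop Γ A j (Dop Γ A i s) x y)
    ↔
    -- δA = R^{∇'} + ∇'A + ½[A,A], componentwise
    (∀ (i j k : Fin d) (x y : E d),
      pdy i (fun x' y' => A x' y' j k) x y - pdy j (fun x' y' => A x' y' i k) x y =
        (- ∑ l, curv Γ x k i j l * y l)
        + (covA Γ A i j k x y - covA Γ A j i k x y)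
        + ∑ m, (A x y i m * pdy m (fun x' y' => A x' y' j k) x y
                - A x y j m * pdy m (fun x' y' => A x' y' i k) x y)) := by
  constructor
  · intro hflat i j k x y
    have hsk : ContDiff ℝ (⊤ : ℕ∞) (fun p : E d × E d => p.2 k) :=
      ContinuousLinearMap.contDiff
        ((ContinuousLinearMap.proj k).comp (ContinuousLinearMap.snd ℝ (E d) (E d)))
    have h0 := comm_eq hΓ hA (fun _ y' => y' k) hsk i j x y
    rw [hflat _ hsk i j x y, sub_self] at h0
    simp only [pdy_coord, Pi.single_apply, mul_ite, mul_one, mul_zero,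
      Finset.sum_ite_eq, Finset.mem_univ, if_true] at h0
    rw [coeff_eq hΓ hT hA i j k x y] at h0
    linarith [h0]
  · intro heq s hs i j x y
    have h0 := comm_eq hΓ hA s hs i j x y
    have hz : ∀ k : Fin d,
        (fderiv ℝ (Vf Γ A j) (x, y) (Vf Γ A i (x, y))).2 k
          - (fderiv ℝ (Vf Γ A i) (x, y) (Vf Γ A j (x, y))).2 k = 0 := by
      intro k
      rw [coeff_eq hΓ hT hA i j k x y]
      exact sub_eq_zero.mpr (heq i j k x y).symm
    simp only [hz, zero_mul, Finset.sum_const_zero] at h0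
    linarith [h0]
end
end

section
/- If a bivector field P on a manifold M is Poisson ([P,P]_{SN} = 0), then the bivector field c with components c^{ij} = P^{ri}P^{sj}R^t_{rst} (for a torsionfree connection ∇ with curvature R) defines a Poisson 2-cocycle that is a coboundary: c = [P, b]_{SN} (up to a universal nonzero constant factor) where b is the vector field with components b^i = ∇_r P^{ir}. In particular [P, c]_{SN} = 0. -/
/- STATEMENT 13: for a Poisson bivector P, the bivector c^{ij} = P^{ri}P^{sj}R^t_{rst} is a Poisson 2-cocycle and is the coboundary (up to a universal nonzero constant) of the vector field b^i = ∇_r P^{ir}; in particular [P,c]_SN = 0. In local coordinates on a chart of ℝ^d. -/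
noncomputable section
open scoped BigOperators

/-- a tensor field with `p` covariant (lower) and `q` contravariant (upper) indices -/
abbrev Tensor (d p q : ℕ) := E d → (Fin p → Fin d) → (Fin q → Fin d) → ℝ

/-- covariant derivative of a `(p,q)`-tensor; the new covariant index comes first -/
def covD {d : ℕ} (Γ : Christoffel d) {p q : ℕ} (T : Tensor d p q) : Tensor d (p + 1) q :=
  fun x I K =>
    pd d (I 0) (fun y => T y (Fin.tail I) K) x
      - ∑ r : Fin p, ∑ m : Fin d,
          Γ x m (I 0) (Fin.tail I r) * T x (Function.update (Fin.tail I) r m) K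
      + ∑ r : Fin q, ∑ m : Fin d,
          Γ x (K r) (I 0) m * T x (Fin.tail I) (Function.update K r m)

/-- iterated covariant differential `∇^n f` of a function (`∇f = df`,
`∇^m f(X_1,…,X_m) = (∇_{X_1}∇^{m-1}f)(X_2,…,X_m)`) -/
def nablaF {d : ℕ} (Γ : Christoffel d) : (n : ℕ) → (E d → ℝ) → Tensor d n 0
  | 0, f => fun x _ _ => f x
  | (n + 1), f => covD Γ (nablaF Γ n f)

def Ptensor {d : ℕ} (P : E d → Fin d → Fin d → ℝ) : Tensor d 0 2 :=
  fun x _ K => P x (K 0) (K 1)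

/-- `∇_r P^{ij}` -/
def dP {d : ℕ} (Γ : Christoffel d) (P : E d → Fin d → Fin d → ℝ)
    (x : E d) (r i j : Fin d) : ℝ :=
  covD Γ (Ptensor P) x ![r] ![i, j]

/-- the vector field `b^i = ∇_r P^{ir}` -/
def bVF {d : ℕ} (Γ : Christoffel d) (P : E d → Fin d → Fin d → ℝ)
    (x : E d) (i : Fin d) : ℝ :=
  ∑ r, dP Γ P x r i r

/-- the bivector `c^{ij} = P^{ri} P^{sj} R^t_{rst}` -/
def cBiv {d : ℕ} (Γ : Christoffel d) (P : E d → Fin d → Fin d → ℝ)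
    (x : E d) (i j : Fin d) : ℝ :=
  ∑ r, ∑ s, ∑ t, P x r i * P x s j * curv Γ x t r s t

/-- the Schouten–Nijenhuis bracket `[P,b]_SN = −L_b P` of a bivector with a vector field -/
def schoutenPb {d : ℕ} (P : E d → Fin d → Fin d → ℝ) (b : E d → Fin d → ℝ)
    (x : E d) (i j : Fin d) : ℝ :=
  - (∑ m, (b x m * pd d m (fun z => P z i j) x
            - P x m j * pd d m (fun z => b z i) x
            - P x i m * pd d m (fun z => b z j) x))

/-- the Schouten–Nijenhuis bracket of two bivector fields, componentwise -/
def schoutenBB {d : ℕ} (P Q : E d → Fin d → Fin d → ℝ)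
    (x : E d) (i j k : Fin d) : ℝ :=
  ∑ m, ((P x m i * pd d m (fun z => Q z j k) x + Q x m i * pd d m (fun z => P z j k) x)
      + (P x m j * pd d m (fun z => Q z k i) x + Q x m j * pd d m (fun z => P z k i) x)
      + (P x m k * pd d m (fun z => Q z i j) x + Q x m k * pd d m (fun z => P z i j) x))

/-! ### Auxiliary calculus toolkit -/

section Toolkit
variable {d : ℕ}

lemma contDiff_diffAt {f : E d → ℝ} (hf : ContDiff ℝ (⊤ : ℕ∞) f) (x : E d) :
    DifferentiableAt ℝ f x := (hf.differentiable (by simp)).differentiableAt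

lemma pdCongr (i : Fin d) (x : E d) {f g : E d → ℝ} (h : ∀ z, f z = g z) :
    pd d i f x = pd d i g x := by
  have : f = g := funext h
  rw [this]

lemma pd_add (i : Fin d) (x : E d) {f g : E d → ℝ}
    (hf : DifferentiableAt ℝ f x) (hg : DifferentiableAt ℝ g x) :
    pd d i (fun z => f z + g z) x = pd d i f x + pd d i g x := by
  simp [pd, fderiv_fun_add hf hg]

lemma pd_sub (i : Fin d) (x : E d) {f g : E d → ℝ}
    (hf : DifferentiableAt ℝ f x) (hg : DifferentiableAt ℝ g x) :
    pd d i (fun z => f z - g z) x = pd d i f x - pd d i g x := by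
  simp [pd, fderiv_fun_sub hf hg]

lemma pd_neg (i : Fin d) (x : E d) (f : E d → ℝ) :
    pd d i (fun z => -f z) x = - pd d i f x := by
  simp [pd, fderiv_neg]

lemma pd_mul (i : Fin d) (x : E d) {f g : E d → ℝ}
    (hf : DifferentiableAt ℝ f x) (hg : DifferentiableAt ℝ g x) :
    pd d i (fun z => f z * g z) x = pd d i f x * g x + f x * pd d i g x := by
  simp [pd, fderiv_fun_mul hf hg]; ring

lemma pd_zero (i : Fin d) (x : E d) :
    pd d i (fun _ => (0:ℝ)) x = 0 := by
  simp [pd]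

lemma pd_sum {ι : Type*} (s : Finset ι) (i : Fin d) (x : E d) {f : ι → E d → ℝ}
    (hf : ∀ a ∈ s, DifferentiableAt ℝ (f a) x) :
    pd d i (fun z => ∑ a ∈ s, f a z) x = ∑ a ∈ s, pd d i (f a) x := by
  simp [pd, fderiv_fun_sum hf]

lemma smooth_pd (i : Fin d) {f : E d → ℝ} (hf : ContDiff ℝ (⊤ : ℕ∞) f) :
    ContDiff ℝ (⊤ : ℕ∞) (fun x => pd d i f x) := by
  show ContDiff ℝ (⊤ : ℕ∞) (fun x => fderiv ℝ f x (Pi.single i 1))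
  exact (ContinuousLinearMap.apply ℝ ℝ (Pi.single i (1:ℝ))).contDiff.comp
    (hf.fderiv_right (m := (⊤ : ℕ∞)) (by simp))

lemma pd_comm (a b : Fin d) (x : E d) {f : E d → ℝ} (hf : ContDiff ℝ (⊤ : ℕ∞) f) :
    pd d a (fun z => pd d b f z) x = pd d b (fun z => pd d a f z) x := by
  show fderiv ℝ (fun z => fderiv ℝ f z (Pi.single b 1)) x (Pi.single a 1)
      = fderiv ℝ (fun z => fderiv ℝ f z (Pi.single a 1)) x (Pi.single b 1)
  have hdf : Differentiable ℝ (fderiv ℝ f) := (hf.fderiv_right (m := (⊤ : ℕ∞)) (by simp)).differentiable (by simp)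
  have h1 : ∀ y, HasFDerivAt f (fderiv ℝ f y) y :=
    fun y => (hf.differentiable (by simp) y).hasFDerivAt
  have h2 : HasFDerivAt (fderiv ℝ f) (fderiv ℝ (fderiv ℝ f) x) x := (hdf x).hasFDerivAt
  have hsymm := second_derivative_symmetric h1 h2
  have key : ∀ u : Fin d → ℝ, fderiv ℝ (fun z => fderiv ℝ f z u) x
      = (fderiv ℝ (fderiv ℝ f) x).flip u := by
    intro u
    have heq : (fderiv ℝ (fun z => fderiv ℝ f z u) x)
        = ((ContinuousLinearMap.apply ℝ ℝ u).comp (fderiv ℝ (fderiv ℝ f) x)) := by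
      have := fderiv_comp (𝕜 := ℝ) x (ContinuousLinearMap.apply ℝ ℝ u).differentiableAt (hdf x)
      rw [ContinuousLinearMap.fderiv] at this
      exact this
    rw [heq]; ext w'; simp
  rw [key, key]
  simpa using hsymm (Pi.single a 1) (Pi.single b 1)

lemma sum_swap_anti (F : Fin d → Fin d → ℝ) (h : ∀ a b, F a b = - F b a) :
    ∑ a, ∑ b, F a b = 0 := by
  have h1 : ∑ a, ∑ b, F a b = ∑ a, ∑ b, F b a := Finset.sum_comm
  have h2 : ∑ a, ∑ b, F b a = - ∑ a, ∑ b, F a b := by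
    rw [← Finset.sum_neg_distrib]
    apply Finset.sum_congr rfl; intro a _
    rw [← Finset.sum_neg_distrib]
    apply Finset.sum_congr rfl; intro b _
    rw [h b a]
  linarith [h1, h2]

end Toolkit
section Geom
variable {d : ℕ} (Γ : Christoffel d) (P : E d → Fin d → Fin d → ℝ)

/-- trace of Christoffel symbols `γ_n = Γ^t_{nt}` -/
def gamV (z : E d) (n : Fin d) : ℝ := ∑ t, Γ z t n t

lemma dP_eq (x : E d) (r i j : Fin d) :
    dP Γ P x r i j = pd d r (fun y => P y i j) x
      + ((∑ m, Γ x i r m * P x m j) + (∑ m, Γ x j r m * P x i m)) := by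
  show covD Γ (Ptensor P) x ![r] ![i, j] = _
  rw [covD]
  simp only [Finset.univ_eq_empty, Finset.sum_empty, sub_zero, Fin.sum_univ_two,
    Matrix.cons_val_zero, Matrix.cons_val_one, Matrix.head_cons, Ptensor]
  simp [Function.update]

lemma bVF_eq (hΓt : Torsionfree Γ) (hPa : ∀ x i j, P x i j = - P x j i)
    (z : E d) (i : Fin d) :
    bVF Γ P z i = (∑ r, pd d r (fun y => P y i r) z) + ∑ n, gamV Γ z n * P z i n := by
  rw [bVF]
  have : ∀ r : Fin d, dP Γ P z r i r = pd d r (fun y => P y i r) z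
      + ((∑ m, Γ z i r m * P z m r) + (∑ m, Γ z r r m * P z i m)) := fun r => dP_eq Γ P z r i r
  rw [Finset.sum_congr rfl (fun r _ => this r)]
  rw [Finset.sum_add_distrib, Finset.sum_add_distrib]
  have h1 : ∑ r, ∑ m, Γ z i r m * P z m r = 0 := by
    apply sum_swap_anti
    intro a b
    rw [hΓt z i a b, hPa z b a]
    ring
  have h2 : ∑ r : Fin d, ∑ m, Γ z r r m * P z i m = ∑ n, gamV Γ z n * P z i n := by
    rw [Finset.sum_comm]
    apply Finset.sum_congr rfl; intro n _
    rw [gamV, Finset.sum_mul]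
    apply Finset.sum_congr rfl; intro r _
    rw [hΓt z r n r]
  rw [h1, h2]; ring

lemma curv_trace (hΓ : SmoothChristoffel Γ) (x : E d) (r s : Fin d) :
    ∑ t, curv Γ x t r s t
      = pd d r (fun z => gamV Γ z s) x - pd d s (fun z => gamV Γ z r) x := by
  have hquad : ∑ t, ∑ u, (Γ x t r u * Γ x u s t - Γ x t s u * Γ x u r t) = 0 := by
    simp only [Finset.sum_sub_distrib]
    have : ∑ t, ∑ u, Γ x t s u * Γ x u r t = ∑ t, ∑ u, Γ x t r u * Γ x u s t := by
      rw [Finset.sum_comm]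
      apply Finset.sum_congr rfl; intro t _
      apply Finset.sum_congr rfl; intro u _
      ring
    rw [this]; ring
  have hexp : ∑ t, curv Γ x t r s t
      = (∑ t, pd d r (fun y => Γ y t s t) x) - (∑ t, pd d s (fun y => Γ y t r t) x)
        + ∑ t, ∑ u, (Γ x t r u * Γ x u s t - Γ x t s u * Γ x u r t) := by
    rw [← Finset.sum_sub_distrib, ← Finset.sum_add_distrib]
    rfl
  rw [hexp, hquad, add_zero]
  congr 1
  · rw [show (fun z => gamV Γ z s) = fun z => ∑ t, Γ z t s t from rfl,
      pd_sum _ _ _ (fun t _ => contDiff_diffAt (hΓ t s t) x)]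
  · rw [show (fun z => gamV Γ z r) = fun z => ∑ t, Γ z t r t from rfl,
      pd_sum _ _ _ (fun t _ => contDiff_diffAt (hΓ t r t) x)]

lemma cBiv_eq (hΓ : SmoothChristoffel Γ) (x : E d) (i j : Fin d) :
    cBiv Γ P x i j = ∑ r, ∑ s, P x r i * P x s j *
      (pd d r (fun z => gamV Γ z s) x - pd d s (fun z => gamV Γ z r) x) := by
  rw [cBiv]
  apply Finset.sum_congr rfl; intro r _
  apply Finset.sum_congr rfl; intro s _
  rw [← curv_trace Γ hΓ x r s, Finset.mul_sum]

lemma smooth_gamV (hΓ : SmoothChristoffel Γ) (n : Fin d) :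
    ContDiff ℝ (⊤ : ℕ∞) (fun z => gamV Γ z n) := by
  apply ContDiff.sum; intro t _; exact hΓ t n t

lemma smooth_bVF (hΓ : SmoothChristoffel Γ) (hΓt : Torsionfree Γ)
    (hP : ∀ i j, ContDiff ℝ (⊤ : ℕ∞) (fun x => P x i j)) (hPa : ∀ x i j, P x i j = - P x j i)
    (i : Fin d) : ContDiff ℝ (⊤ : ℕ∞) (fun z => bVF Γ P z i) := by
  have : (fun z => bVF Γ P z i)
      = fun z => (∑ r, pd d r (fun y => P y i r) z) + ∑ n, gamV Γ z n * P z i n :=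
    funext (fun z => bVF_eq Γ P hΓt hPa z i)
  rw [this]
  apply ContDiff.add
  · apply ContDiff.sum; intro r _; exact smooth_pd r (hP i r)
  · apply ContDiff.sum; intro n _; exact (smooth_gamV Γ hΓ n).mul (hP i n)

lemma pd_bVF (hΓ : SmoothChristoffel Γ) (hΓt : Torsionfree Γ)
    (hP : ∀ i j, ContDiff ℝ (⊤ : ℕ∞) (fun x => P x i j)) (hPa : ∀ x i j, P x i j = - P x j i)
    (m i : Fin d) (x : E d) :
    pd d m (fun z => bVF Γ P z i) x
      = (∑ r, pd d m (fun z => pd d r (fun y => P y i r) z) x)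
        + ∑ n, (pd d m (fun z => gamV Γ z n) x * P x i n
            + gamV Γ x n * pd d m (fun z => P z i n) x) := by
  rw [pdCongr m x (fun z => bVF_eq Γ P hΓt hPa z i)]
  rw [pd_add m x]
  · congr 1
    · rw [pd_sum _ _ _ (fun r _ => contDiff_diffAt (smooth_pd r (hP i r)) x)]
    · rw [pd_sum _ _ _ (fun n _ => contDiff_diffAt ((smooth_gamV Γ hΓ n).mul (hP i n)) x)]
      apply Finset.sum_congr rfl; intro n _
      rw [pd_mul m x (contDiff_diffAt (smooth_gamV Γ hΓ n) x) (contDiff_diffAt (hP i n) x)]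
  · exact DifferentiableAt.fun_sum (fun r _ => contDiff_diffAt (smooth_pd r (hP i r)) x)
  · exact DifferentiableAt.fun_sum (fun n _ =>
      contDiff_diffAt ((smooth_gamV Γ hΓ n).mul (hP i n)) x)

end Geom
section Key1
variable {d : ℕ}

lemma key1 (p : Fin d → Fin d → ℝ) (dp : Fin d → Fin d → Fin d → ℝ)
    (ddp : Fin d → Fin d → Fin d → Fin d → ℝ) (g : Fin d → ℝ) (dg : Fin d → Fin d → ℝ)
    (hp : ∀ a b, p a b = - p b a)
    (hdp : ∀ m a b, dp m a b = - dp m b a)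
    (hdds : ∀ m n a b, ddp m n a b = ddp n m a b)
    (hdda : ∀ m n a b, ddp m n a b = - ddp m n b a)
    (hJ : ∀ a b c, ∑ s, (p s a * dp s b c + p s b * dp s c a + p s c * dp s a b) = 0)
    (hdJ : ∀ m a b c, ∑ s, (dp m s a * dp s b c + p s a * ddp m s b c
        + (dp m s b * dp s c a + p s b * ddp m s c a)
        + (dp m s c * dp s a b + p s c * ddp m s a b)) = 0)
    (i j : Fin d) :
    ∑ r, ∑ s, p r i * p s j * (dg r s - dg s r)
      = -(∑ m, ((((∑ r, dp r m r) + ∑ n, g n * p m n) * dp m i j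
          - p m j * ((∑ r, ddp m r i r) + ∑ n, (dg m n * p i n + g n * dp m i n)))
          - p i m * ((∑ r, ddp m r j r) + ∑ n, (dg m n * p j n + g n * dp m j n)))) := by
  have hexp : -(∑ m, ((((∑ r, dp r m r) + ∑ n, g n * p m n) * dp m i j
          - p m j * ((∑ r, ddp m r i r) + ∑ n, (dg m n * p i n + g n * dp m i n)))
          - p i m * ((∑ r, ddp m r j r) + ∑ n, (dg m n * p j n + g n * dp m j n))))
      = -(∑ m, ∑ r, dp r m r * dp m i j) - (∑ m, ∑ n, g n * p m n * dp m i j)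
        + ((∑ m, ∑ r, p m j * ddp m r i r)
          + ((∑ m, ∑ n, p m j * (dg m n * p i n)) + (∑ m, ∑ n, p m j * (g n * dp m i n))))
        + ((∑ m, ∑ r, p i m * ddp m r j r)
          + ((∑ m, ∑ n, p i m * (dg m n * p j n)) + (∑ m, ∑ n, p i m * (g n * dp m j n)))) := by
    simp only [Finset.sum_sub_distrib, Finset.sum_add_distrib, Finset.sum_mul,
      Finset.mul_sum, add_mul, mul_add]
    ring
  rw [hexp]
  have hG1 : (∑ m, ∑ r, p m j * ddp m r i r) + (∑ m, ∑ r, p i m * ddp m r j r)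
      - (∑ m, ∑ r, dp r m r * dp m i j) = 0 := by
    have Hsplit : (∑ k, ∑ s, dp k s i * dp s j k) + (∑ k, ∑ s, p s i * ddp k s j k)
        + ((∑ k, ∑ s, dp k s j * dp s k i) + (∑ k, ∑ s, p s j * ddp k s k i))
        + ((∑ k, ∑ s, dp k s k * dp s i j) + (∑ k, ∑ s, p s k * ddp k s i j)) = 0 := by
      have H : ∑ k, ∑ s, (dp k s i * dp s j k + p s i * ddp k s j k
          + (dp k s j * dp s k i + p s j * ddp k s k i)
          + (dp k s k * dp s i j + p s k * ddp k s i j)) = 0 :=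
        Finset.sum_eq_zero (fun k _ => hdJ k i j k)
      rw [← H]; simp only [Finset.sum_add_distrib]
    have h13 : (∑ k, ∑ s, dp k s i * dp s j k) + (∑ k, ∑ s, dp k s j * dp s k i) = 0 := by
      have hswap : ∑ k, ∑ s, dp k s j * dp s k i = ∑ k, ∑ s, dp s k j * dp k s i :=
        Finset.sum_comm
      rw [hswap, ← Finset.sum_add_distrib]
      apply Finset.sum_eq_zero; intro k _
      rw [← Finset.sum_add_distrib]
      apply Finset.sum_eq_zero; intro s _
      rw [hdp s k j]; ring
    have h6 : (∑ k, ∑ s, p s k * ddp k s i j) = 0 := by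
      apply sum_swap_anti; intro a b
      rw [hp b a, hdds b a i j]; ring
    have h2 : (∑ k, ∑ s, p s i * ddp k s j k) = - ∑ m, ∑ r, p i m * ddp m r j r := by
      rw [Finset.sum_comm, ← Finset.sum_neg_distrib]
      apply Finset.sum_congr rfl; intro m _
      rw [← Finset.sum_neg_distrib]
      apply Finset.sum_congr rfl; intro r _
      rw [hdds r m j r, hp m i]; ring
    have h4 : (∑ k, ∑ s, p s j * ddp k s k i) = - ∑ m, ∑ r, p m j * ddp m r i r := by
      rw [Finset.sum_comm, ← Finset.sum_neg_distrib]
      apply Finset.sum_congr rfl; intro m _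
      rw [← Finset.sum_neg_distrib]
      apply Finset.sum_congr rfl; intro r _
      rw [hdds r m r i, hdda m r r i]; ring
    have h5 : (∑ k, ∑ s, dp k s k * dp s i j) = ∑ m, ∑ r, dp r m r * dp m i j :=
      Finset.sum_comm
    linarith [Hsplit, h13, h6, h2, h4, h5]
  have hG2 : (∑ m, ∑ n, p m j * (g n * dp m i n)) + (∑ m, ∑ n, p i m * (g n * dp m j n))
      - (∑ m, ∑ n, g n * p m n * dp m i j) = 0 := by
    have e1 : ∑ m, ∑ n, p m j * (g n * dp m i n)
        = ∑ n, ∑ m, p m j * (g n * dp m i n) := Finset.sum_comm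
    have e2 : ∑ m, ∑ n, p i m * (g n * dp m j n)
        = ∑ n, ∑ m, p i m * (g n * dp m j n) := Finset.sum_comm
    have e3 : ∑ m, ∑ n, g n * p m n * dp m i j
        = ∑ n, ∑ m, g n * p m n * dp m i j := Finset.sum_comm
    rw [e1, e2, e3]
    simp only [← Finset.sum_add_distrib, ← Finset.sum_sub_distrib]
    apply Finset.sum_eq_zero; intro n _
    have : ∑ m, (p m j * (g n * dp m i n) + p i m * (g n * dp m j n) - g n * p m n * dp m i j)
        = ∑ m, (-g n) * (p m i * dp m j n + p m j * dp m n i + p m n * dp m i j) := by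
      apply Finset.sum_congr rfl; intro m _
      rw [hp i m, hdp m i n]; ring
    rw [this, ← Finset.mul_sum, hJ i j n, mul_zero]
  have hG3 : ∑ r, ∑ s, p r i * p s j * (dg r s - dg s r)
      = (∑ m, ∑ n, p m j * (dg m n * p i n)) + (∑ m, ∑ n, p i m * (dg m n * p j n)) := by
    have hswap : ∑ r, ∑ s, p r i * p s j * dg s r
        = ∑ r, ∑ s, p s i * p r j * dg r s := Finset.sum_comm
    have hsplit : ∑ r, ∑ s, p r i * p s j * (dg r s - dg s r)
        = (∑ r, ∑ s, p r i * p s j * dg r s) - (∑ r, ∑ s, p r i * p s j * dg s r) := by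
      simp only [mul_sub, Finset.sum_sub_distrib]
    rw [hsplit, hswap]
    simp only [← Finset.sum_add_distrib, ← Finset.sum_sub_distrib]
    apply Finset.sum_congr rfl; intro r _
    apply Finset.sum_congr rfl; intro s _
    rw [hp i s, hp i r, hp j s]; ring
  linarith [hG1, hG2, hG3]

end Key1
section Part1
variable {d : ℕ}

lemma jacobi_facts (P : E d → Fin d → Fin d → ℝ)
    (hP : ∀ i j, ContDiff ℝ (⊤ : ℕ∞) (fun x => P x i j))
    (hJac : ∀ x i j k, ∑ s, (P x s i * pd d s (fun z => P z j k) x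
        + P x s j * pd d s (fun z => P z k i) x
        + P x s k * pd d s (fun z => P z i j) x) = 0)
    (x : E d) (m a b c : Fin d) :
    ∑ s, (pd d m (fun z => P z s a) x * pd d s (fun z => P z b c) x
        + P x s a * pd d m (fun z => pd d s (fun y => P y b c) z) x
      + (pd d m (fun z => P z s b) x * pd d s (fun z => P z c a) x
        + P x s b * pd d m (fun z => pd d s (fun y => P y c a) z) x)
      + (pd d m (fun z => P z s c) x * pd d s (fun z => P z a b) x
        + P x s c * pd d m (fun z => pd d s (fun y => P y a b) z) x)) = 0 := by
  have smd : ∀ (s a' b' : Fin d), ContDiff ℝ (⊤ : ℕ∞) (fun z => pd d s (fun y => P y a' b') z) :=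
    fun s a' b' => smooth_pd s (hP a' b')
  have smprod : ∀ (s i' a' b' : Fin d),
      ContDiff ℝ (⊤ : ℕ∞) (fun z => P z s i' * pd d s (fun y => P y a' b') z) :=
    fun s i' a' b' => (hP s i').mul (smd s a' b')
  have hterm : ∀ s : Fin d,
      pd d m (fun z => P z s a * pd d s (fun y => P y b c) z
          + P z s b * pd d s (fun y => P y c a) z
          + P z s c * pd d s (fun y => P y a b) z) x
      = pd d m (fun z => P z s a) x * pd d s (fun z => P z b c) x
        + P x s a * pd d m (fun z => pd d s (fun y => P y b c) z) x
      + (pd d m (fun z => P z s b) x * pd d s (fun z => P z c a) x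
        + P x s b * pd d m (fun z => pd d s (fun y => P y c a) z) x)
      + (pd d m (fun z => P z s c) x * pd d s (fun z => P z a b) x
        + P x s c * pd d m (fun z => pd d s (fun y => P y a b) z) x) := by
    intro s
    rw [pd_add m x (contDiff_diffAt ((smprod s a b c).add (smprod s b c a)) x)
        (contDiff_diffAt (smprod s c a b) x),
      pd_add m x (contDiff_diffAt (smprod s a b c) x) (contDiff_diffAt (smprod s b c a) x),
      pd_mul m x (contDiff_diffAt (hP s a) x) (contDiff_diffAt (smd s b c) x),
      pd_mul m x (contDiff_diffAt (hP s b) x) (contDiff_diffAt (smd s c a) x),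
      pd_mul m x (contDiff_diffAt (hP s c) x) (contDiff_diffAt (smd s a b) x)]
  calc ∑ s, (pd d m (fun z => P z s a) x * pd d s (fun z => P z b c) x
        + P x s a * pd d m (fun z => pd d s (fun y => P y b c) z) x
      + (pd d m (fun z => P z s b) x * pd d s (fun z => P z c a) x
        + P x s b * pd d m (fun z => pd d s (fun y => P y c a) z) x)
      + (pd d m (fun z => P z s c) x * pd d s (fun z => P z a b) x
        + P x s c * pd d m (fun z => pd d s (fun y => P y a b) z) x))
      = ∑ s, pd d m (fun z => P z s a * pd d s (fun y => P y b c) z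
          + P z s b * pd d s (fun y => P y c a) z
          + P z s c * pd d s (fun y => P y a b) z) x :=
        (Finset.sum_congr rfl (fun s _ => (hterm s).symm))
    _ = pd d m (fun z => ∑ s, (P z s a * pd d s (fun y => P y b c) z
          + P z s b * pd d s (fun y => P y c a) z
          + P z s c * pd d s (fun y => P y a b) z)) x :=
        (pd_sum _ m x (fun s _ => contDiff_diffAt
          (((smprod s a b c).add (smprod s b c a)).add (smprod s c a b)) x)).symm
    _ = pd d m (fun _ => (0:ℝ)) x := pdCongr m x (fun z => hJac z a b c)
    _ = 0 := pd_zero m x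

lemma part1 (Γ : Christoffel d) (hΓ : SmoothChristoffel Γ) (hΓt : Torsionfree Γ)
    (P : E d → Fin d → Fin d → ℝ)
    (hP : ∀ i j, ContDiff ℝ (⊤ : ℕ∞) (fun x => P x i j))
    (hPa : ∀ x i j, P x i j = - P x j i)
    (hJac : ∀ x i j k, ∑ s, (P x s i * pd d s (fun z => P z j k) x
        + P x s j * pd d s (fun z => P z k i) x
        + P x s k * pd d s (fun z => P z i j) x) = 0)
    (x : E d) (i j : Fin d) :
    cBiv Γ P x i j = schoutenPb P (fun z => bVF Γ P z) x i j := by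
  have hdp : ∀ (m a b : Fin d), pd d m (fun z => P z a b) x
      = - pd d m (fun z => P z b a) x := by
    intro m a b
    rw [pdCongr m x (fun z => hPa z a b)]
    exact pd_neg m x _
  have hdda : ∀ (m n a b : Fin d), pd d m (fun z => pd d n (fun y => P y a b) z) x
      = - pd d m (fun z => pd d n (fun y => P y b a) z) x := by
    intro m n a b
    have h : ∀ z, pd d n (fun y => P y a b) z = - pd d n (fun y => P y b a) z := by
      intro z
      rw [pdCongr n z (fun y => hPa y a b)]
      exact pd_neg n z _
    rw [pdCongr m x h]
    exact pd_neg m x _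
  have hdds : ∀ (m n a b : Fin d), pd d m (fun z => pd d n (fun y => P y a b) z) x
      = pd d n (fun z => pd d m (fun y => P y a b) z) x :=
    fun m n a b => pd_comm m n x (hP a b)
  rw [cBiv_eq Γ P hΓ x i j, schoutenPb]
  have hR : ∑ m, (bVF Γ P x m * pd d m (fun z => P z i j) x
      - P x m j * pd d m (fun z => bVF Γ P z i) x
      - P x i m * pd d m (fun z => bVF Γ P z j) x)
    = ∑ m, ((((∑ r, pd d r (fun y => P y m r) x) + ∑ n, gamV Γ x n * P x m n)
          * pd d m (fun z => P z i j) x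
        - P x m j * ((∑ r, pd d m (fun z => pd d r (fun y => P y i r) z) x)
          + ∑ n, (pd d m (fun z => gamV Γ z n) x * P x i n
              + gamV Γ x n * pd d m (fun z => P z i n) x)))
        - P x i m * ((∑ r, pd d m (fun z => pd d r (fun y => P y j r) z) x)
          + ∑ n, (pd d m (fun z => gamV Γ z n) x * P x j n
              + gamV Γ x n * pd d m (fun z => P z j n) x))) := by
    apply Finset.sum_congr rfl; intro m _
    rw [bVF_eq Γ P hΓt hPa x m, pd_bVF Γ P hΓ hΓt hP hPa m i x,
      pd_bVF Γ P hΓ hΓt hP hPa m j x]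
  rw [hR]
  exact key1 (fun a b => P x a b)
    (fun m a b => pd d m (fun z => P z a b) x)
    (fun m n a b => pd d m (fun z => pd d n (fun y => P y a b) z) x)
    (fun n => gamV Γ x n)
    (fun m n => pd d m (fun z => gamV Γ z n) x)
    (fun a b => hPa x a b) hdp hdds hdda
    (fun a b c => hJac x a b c)
    (fun m a b c => jacobi_facts P hP hJac x m a b c) i j

end Part1
section Key2
variable {d : ℕ}

lemma key2 (p : Fin d → Fin d → ℝ) (dp : Fin d → Fin d → Fin d → ℝ)
    (ddp : Fin d → Fin d → Fin d → Fin d → ℝ)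
    (bv : Fin d → ℝ) (db : Fin d → Fin d → ℝ) (ddb : Fin d → Fin d → Fin d → ℝ)
    (hp : ∀ a b, p a b = - p b a)
    (hdds : ∀ m n a b, ddp m n a b = ddp n m a b)
    (hddbs : ∀ m n a, ddb m n a = ddb n m a)
    (hJ : ∀ a b c, ∑ s, (p s a * dp s b c + p s b * dp s c a + p s c * dp s a b) = 0)
    (hdJ : ∀ m a b c, ∑ s, (dp m s a * dp s b c + p s a * ddp m s b c
        + (dp m s b * dp s c a + p s b * ddp m s c a)
        + (dp m s c * dp s a b + p s c * ddp m s a b)) = 0)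
    (i j k : Fin d) :
    ∑ m, ((p m i * (-(∑ n, ((db m n * dp n j k + bv n * ddp m n j k)
            - (dp m n k * db n j + p n k * ddb m n j)
            - (dp m j n * db n k + p j n * ddb m n k))))
        + (-(∑ n, (bv n * dp n m i - p n i * db n m - p m n * db n i))) * dp m j k)
      + (p m j * (-(∑ n, ((db m n * dp n k i + bv n * ddp m n k i)
            - (dp m n i * db n k + p n i * ddb m n k)
            - (dp m k n * db n i + p k n * ddb m n i))))
        + (-(∑ n, (bv n * dp n m j - p n j * db n m - p m n * db n j))) * dp m k i)
      + (p m k * (-(∑ n, ((db m n * dp n i j + bv n * ddp m n i j)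
            - (dp m n j * db n i + p n j * ddb m n i)
            - (dp m i n * db n j + p i n * ddb m n j))))
        + (-(∑ n, (bv n * dp n m k - p n k * db n m - p m n * db n k))) * dp m i j)) = 0 := by
  have hexp : ∑ m, ((p m i * (-(∑ n, ((db m n * dp n j k + bv n * ddp m n j k)
            - (dp m n k * db n j + p n k * ddb m n j)
            - (dp m j n * db n k + p j n * ddb m n k))))
        + (-(∑ n, (bv n * dp n m i - p n i * db n m - p m n * db n i))) * dp m j k)
      + (p m j * (-(∑ n, ((db m n * dp n k i + bv n * ddp m n k i)
            - (dp m n i * db n k + p n i * ddb m n k)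
            - (dp m k n * db n i + p k n * ddb m n i))))
        + (-(∑ n, (bv n * dp n m j - p n j * db n m - p m n * db n j))) * dp m k i)
      + (p m k * (-(∑ n, ((db m n * dp n i j + bv n * ddp m n i j)
            - (dp m n j * db n i + p n j * ddb m n i)
            - (dp m i n * db n j + p i n * ddb m n j))))
        + (-(∑ n, (bv n * dp n m k - p n k * db n m - p m n * db n k))) * dp m i j))
    = (-(∑ m, ∑ n, p m i * (db m n * dp n j k)) - (∑ m, ∑ n, p m i * (bv n * ddp m n j k))
        + (∑ m, ∑ n, p m i * (dp m n k * db n j)) + (∑ m, ∑ n, p m i * (p n k * ddb m n j))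
        + (∑ m, ∑ n, p m i * (dp m j n * db n k)) + (∑ m, ∑ n, p m i * (p j n * ddb m n k))
        + (-(∑ m, ∑ n, bv n * dp n m i * dp m j k) + (∑ m, ∑ n, p n i * db n m * dp m j k)
          + (∑ m, ∑ n, p m n * db n i * dp m j k)))
      + (-(∑ m, ∑ n, p m j * (db m n * dp n k i)) - (∑ m, ∑ n, p m j * (bv n * ddp m n k i))
        + (∑ m, ∑ n, p m j * (dp m n i * db n k)) + (∑ m, ∑ n, p m j * (p n i * ddb m n k))
        + (∑ m, ∑ n, p m j * (dp m k n * db n i)) + (∑ m, ∑ n, p m j * (p k n * ddb m n i))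
        + (-(∑ m, ∑ n, bv n * dp n m j * dp m k i) + (∑ m, ∑ n, p n j * db n m * dp m k i)
          + (∑ m, ∑ n, p m n * db n j * dp m k i)))
      + (-(∑ m, ∑ n, p m k * (db m n * dp n i j)) - (∑ m, ∑ n, p m k * (bv n * ddp m n i j))
        + (∑ m, ∑ n, p m k * (dp m n j * db n i)) + (∑ m, ∑ n, p m k * (p n j * ddb m n i))
        + (∑ m, ∑ n, p m k * (dp m i n * db n j)) + (∑ m, ∑ n, p m k * (p i n * ddb m n j))
        + (-(∑ m, ∑ n, bv n * dp n m k * dp m i j) + (∑ m, ∑ n, p n k * db n m * dp m i j)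
          + (∑ m, ∑ n, p m n * db n k * dp m i j))) := by
    simp only [mul_neg, neg_mul, Finset.mul_sum, Finset.sum_mul, mul_sub, sub_mul,
      mul_add, add_mul, Finset.sum_add_distrib, Finset.sum_sub_distrib,
      Finset.sum_neg_distrib]
    ring
  rw [hexp]
  -- second-derivative-of-b groups vanish by (anti)symmetry
  have D1 : (∑ m, ∑ n, p m i * (p n k * ddb m n j)) + (∑ m, ∑ n, p m k * (p i n * ddb m n j))
      = 0 := by
    simp only [← Finset.sum_add_distrib]
    apply sum_swap_anti; intro a b
    rw [hddbs b a j, hp i b, hp i a]; ring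
  have D2 : (∑ m, ∑ n, p m i * (p j n * ddb m n k)) + (∑ m, ∑ n, p m j * (p n i * ddb m n k))
      = 0 := by
    simp only [← Finset.sum_add_distrib]
    apply sum_swap_anti; intro a b
    rw [hddbs b a k, hp j b, hp j a]; ring
  have D3 : (∑ m, ∑ n, p m j * (p k n * ddb m n i)) + (∑ m, ∑ n, p m k * (p n j * ddb m n i))
      = 0 := by
    simp only [← Finset.sum_add_distrib]
    apply sum_swap_anti; intro a b
    rw [hddbs b a i, hp k b, hp k a]; ring
  -- the b-terms vanish by the differentiated Jacobi identity
  have B : (∑ m, ∑ n, p m i * (bv n * ddp m n j k)) + (∑ m, ∑ n, p m j * (bv n * ddp m n k i))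
      + (∑ m, ∑ n, p m k * (bv n * ddp m n i j)) + (∑ m, ∑ n, bv n * dp n m i * dp m j k)
      + (∑ m, ∑ n, bv n * dp n m j * dp m k i) + (∑ m, ∑ n, bv n * dp n m k * dp m i j)
      = 0 := by
    have e1 : (∑ m, ∑ n, p m i * (bv n * ddp m n j k))
        = ∑ n, ∑ m, p m i * (bv n * ddp m n j k) := Finset.sum_comm
    have e2 : (∑ m, ∑ n, p m j * (bv n * ddp m n k i))
        = ∑ n, ∑ m, p m j * (bv n * ddp m n k i) := Finset.sum_comm
    have e3 : (∑ m, ∑ n, p m k * (bv n * ddp m n i j))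
        = ∑ n, ∑ m, p m k * (bv n * ddp m n i j) := Finset.sum_comm
    have e4 : (∑ m, ∑ n, bv n * dp n m i * dp m j k)
        = ∑ n, ∑ m, bv n * dp n m i * dp m j k := Finset.sum_comm
    have e5 : (∑ m, ∑ n, bv n * dp n m j * dp m k i)
        = ∑ n, ∑ m, bv n * dp n m j * dp m k i := Finset.sum_comm
    have e6 : (∑ m, ∑ n, bv n * dp n m k * dp m i j)
        = ∑ n, ∑ m, bv n * dp n m k * dp m i j := Finset.sum_comm
    rw [e1, e2, e3, e4, e5, e6]
    simp only [← Finset.sum_add_distrib]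
    apply Finset.sum_eq_zero; intro n _
    have h : ∑ m, (p m i * (bv n * ddp m n j k) + p m j * (bv n * ddp m n k i)
          + p m k * (bv n * ddp m n i j) + bv n * dp n m i * dp m j k
          + bv n * dp n m j * dp m k i + bv n * dp n m k * dp m i j)
        = bv n * ∑ m, (dp n m i * dp m j k + p m i * ddp n m j k
          + (dp n m j * dp m k i + p m j * ddp n m k i)
          + (dp n m k * dp m i j + p m k * ddp n m i j)) := by
      rw [Finset.mul_sum]
      apply Finset.sum_congr rfl; intro m _
      rw [hdds m n j k, hdds m n k i, hdds m n i j]; ring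
    rw [h, hdJ n i j k, mul_zero]
  -- first-derivative cross terms cancel pairwise
  have C1 : (∑ m, ∑ n, p n i * db n m * dp m j k)
      = ∑ m, ∑ n, p m i * (db m n * dp n j k) := by
    rw [Finset.sum_comm]
    apply Finset.sum_congr rfl; intro m _
    apply Finset.sum_congr rfl; intro n _
    ring
  have C2 : (∑ m, ∑ n, p n j * db n m * dp m k i)
      = ∑ m, ∑ n, p m j * (db m n * dp n k i) := by
    rw [Finset.sum_comm]
    apply Finset.sum_congr rfl; intro m _
    apply Finset.sum_congr rfl; intro n _
    ring
  have C3 : (∑ m, ∑ n, p n k * db n m * dp m i j)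
      = ∑ m, ∑ n, p m k * (db m n * dp n i j) := by
    rw [Finset.sum_comm]
    apply Finset.sum_congr rfl; intro m _
    apply Finset.sum_congr rfl; intro n _
    ring
  -- remaining first-derivative terms vanish by the Jacobi identity
  have E1 : (∑ m, ∑ n, p m n * db n i * dp m j k) + (∑ m, ∑ n, p m j * (dp m k n * db n i))
      + (∑ m, ∑ n, p m k * (dp m n j * db n i)) = 0 := by
    have e1 : (∑ m, ∑ n, p m n * db n i * dp m j k)
        = ∑ n, ∑ m, p m n * db n i * dp m j k := Finset.sum_comm
    have e2 : (∑ m, ∑ n, p m j * (dp m k n * db n i))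
        = ∑ n, ∑ m, p m j * (dp m k n * db n i) := Finset.sum_comm
    have e3 : (∑ m, ∑ n, p m k * (dp m n j * db n i))
        = ∑ n, ∑ m, p m k * (dp m n j * db n i) := Finset.sum_comm
    rw [e1, e2, e3]
    simp only [← Finset.sum_add_distrib]
    apply Finset.sum_eq_zero; intro n _
    have h : ∑ m, (p m n * db n i * dp m j k + p m j * (dp m k n * db n i)
          + p m k * (dp m n j * db n i))
        = db n i * ∑ m, (p m n * dp m j k + p m j * dp m k n + p m k * dp m n j) := by
      rw [Finset.mul_sum]
      apply Finset.sum_congr rfl; intro m _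
      ring
    rw [h, hJ n j k, mul_zero]
  have E2 : (∑ m, ∑ n, p m n * db n j * dp m k i) + (∑ m, ∑ n, p m k * (dp m i n * db n j))
      + (∑ m, ∑ n, p m i * (dp m n k * db n j)) = 0 := by
    have e1 : (∑ m, ∑ n, p m n * db n j * dp m k i)
        = ∑ n, ∑ m, p m n * db n j * dp m k i := Finset.sum_comm
    have e2 : (∑ m, ∑ n, p m k * (dp m i n * db n j))
        = ∑ n, ∑ m, p m k * (dp m i n * db n j) := Finset.sum_comm
    have e3 : (∑ m, ∑ n, p m i * (dp m n k * db n j))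
        = ∑ n, ∑ m, p m i * (dp m n k * db n j) := Finset.sum_comm
    rw [e1, e2, e3]
    simp only [← Finset.sum_add_distrib]
    apply Finset.sum_eq_zero; intro n _
    have h : ∑ m, (p m n * db n j * dp m k i + p m k * (dp m i n * db n j)
          + p m i * (dp m n k * db n j))
        = db n j * ∑ m, (p m n * dp m k i + p m k * dp m i n + p m i * dp m n k) := by
      rw [Finset.mul_sum]
      apply Finset.sum_congr rfl; intro m _
      ring
    rw [h, hJ n k i, mul_zero]
  have E3 : (∑ m, ∑ n, p m n * db n k * dp m i j) + (∑ m, ∑ n, p m i * (dp m j n * db n k))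
      + (∑ m, ∑ n, p m j * (dp m n i * db n k)) = 0 := by
    have e1 : (∑ m, ∑ n, p m n * db n k * dp m i j)
        = ∑ n, ∑ m, p m n * db n k * dp m i j := Finset.sum_comm
    have e2 : (∑ m, ∑ n, p m i * (dp m j n * db n k))
        = ∑ n, ∑ m, p m i * (dp m j n * db n k) := Finset.sum_comm
    have e3 : (∑ m, ∑ n, p m j * (dp m n i * db n k))
        = ∑ n, ∑ m, p m j * (dp m n i * db n k) := Finset.sum_comm
    rw [e1, e2, e3]
    simp only [← Finset.sum_add_distrib]
    apply Finset.sum_eq_zero; intro n _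
    have h : ∑ m, (p m n * db n k * dp m i j + p m i * (dp m j n * db n k)
          + p m j * (dp m n i * db n k))
        = db n k * ∑ m, (p m n * dp m i j + p m i * dp m j n + p m j * dp m n i) := by
      rw [Finset.mul_sum]
      apply Finset.sum_congr rfl; intro m _
      ring
    rw [h, hJ n i j, mul_zero]
  linarith [D1, D2, D3, B, C1, C2, C3, E1, E2, E3]

end Key2
section Part2
variable {d : ℕ}

lemma schoutenPb_val (Γ : Christoffel d) (P : E d → Fin d → Fin d → ℝ) (x : E d)
    (a c : Fin d) :
    schoutenPb P (fun z' => bVF Γ P z') x a c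
      = -(∑ n, (bVF Γ P x n * pd d n (fun z => P z a c) x
          - P x n c * pd d n (fun z => bVF Γ P z a) x
          - P x a n * pd d n (fun z => bVF Γ P z c) x)) := rfl

lemma pd_schoutenPb (Γ : Christoffel d) (hΓ : SmoothChristoffel Γ) (hΓt : Torsionfree Γ)
    (P : E d → Fin d → Fin d → ℝ)
    (hP : ∀ i j, ContDiff ℝ (⊤ : ℕ∞) (fun x => P x i j))
    (hPa : ∀ x i j, P x i j = - P x j i)
    (x : E d) (m a c : Fin d) :
    pd d m (fun z => schoutenPb P (fun z' => bVF Γ P z') z a c) x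
      = -(∑ n, ((pd d m (fun z => bVF Γ P z n) x * pd d n (fun z => P z a c) x
            + bVF Γ P x n * pd d m (fun z => pd d n (fun y => P y a c) z) x)
          - (pd d m (fun z => P z n c) x * pd d n (fun z => bVF Γ P z a) x
            + P x n c * pd d m (fun z => pd d n (fun y => bVF Γ P y a) z) x)
          - (pd d m (fun z => P z a n) x * pd d n (fun z => bVF Γ P z c) x
            + P x a n * pd d m (fun z => pd d n (fun y => bVF Γ P y c) z) x))) := by
  have smb : ∀ a', ContDiff ℝ (⊤ : ℕ∞) (fun z => bVF Γ P z a') :=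
    fun a' => smooth_bVF Γ P hΓ hΓt hP hPa a'
  have smdP : ∀ (n a' c' : Fin d), ContDiff ℝ (⊤ : ℕ∞) (fun z => pd d n (fun y => P y a' c') z) :=
    fun n a' c' => smooth_pd n (hP a' c')
  have smdb : ∀ (n a' : Fin d), ContDiff ℝ (⊤ : ℕ∞) (fun z => pd d n (fun y => bVF Γ P y a') z) :=
    fun n a' => smooth_pd n (smb a')
  have sm1 : ∀ n : Fin d, ContDiff ℝ (⊤ : ℕ∞)
      (fun z => bVF Γ P z n * pd d n (fun y => P y a c) z) :=
    fun n => (smb n).mul (smdP n a c)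
  have sm2 : ∀ n : Fin d, ContDiff ℝ (⊤ : ℕ∞)
      (fun z => P z n c * pd d n (fun y => bVF Γ P y a) z) :=
    fun n => (hP n c).mul (smdb n a)
  have sm3 : ∀ n : Fin d, ContDiff ℝ (⊤ : ℕ∞)
      (fun z => P z a n * pd d n (fun y => bVF Γ P y c) z) :=
    fun n => (hP a n).mul (smdb n c)
  have smsummand : ∀ n : Fin d, ContDiff ℝ (⊤ : ℕ∞)
      (fun z => bVF Γ P z n * pd d n (fun y => P y a c) z
        - P z n c * pd d n (fun y => bVF Γ P y a) z
        - P z a n * pd d n (fun y => bVF Γ P y c) z) :=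
    fun n => ((sm1 n).sub (sm2 n)).sub (sm3 n)
  show pd d m (fun z => -(∑ n, (bVF Γ P z n * pd d n (fun y => P y a c) z
      - P z n c * pd d n (fun y => bVF Γ P y a) z
      - P z a n * pd d n (fun y => bVF Γ P y c) z))) x = _
  rw [pd_neg]
  congr 1
  rw [pd_sum _ m x (fun n _ => contDiff_diffAt (smsummand n) x)]
  apply Finset.sum_congr rfl; intro n _
  rw [pd_sub m x (contDiff_diffAt ((sm1 n).sub (sm2 n)) x) (contDiff_diffAt (sm3 n) x),
    pd_sub m x (contDiff_diffAt (sm1 n) x) (contDiff_diffAt (sm2 n) x),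
    pd_mul m x (contDiff_diffAt (smb n) x) (contDiff_diffAt (smdP n a c) x),
    pd_mul m x (contDiff_diffAt (hP n c) x) (contDiff_diffAt (smdb n a) x),
    pd_mul m x (contDiff_diffAt (hP a n) x) (contDiff_diffAt (smdb n c) x)]

lemma part2 (Γ : Christoffel d) (hΓ : SmoothChristoffel Γ) (hΓt : Torsionfree Γ)
    (P : E d → Fin d → Fin d → ℝ)
    (hP : ∀ i j, ContDiff ℝ (⊤ : ℕ∞) (fun x => P x i j))
    (hPa : ∀ x i j, P x i j = - P x j i)
    (hJac : ∀ x i j k, ∑ s, (P x s i * pd d s (fun z => P z j k) x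
        + P x s j * pd d s (fun z => P z k i) x
        + P x s k * pd d s (fun z => P z i j) x) = 0)
    (x : E d) (i j k : Fin d) :
    schoutenBB P (fun z i' j' => cBiv Γ P z i' j') x i j k = 0 := by
  have smb : ∀ a', ContDiff ℝ (⊤ : ℕ∞) (fun z => bVF Γ P z a') :=
    fun a' => smooth_bVF Γ P hΓ hΓt hP hPa a'
  have hfun : (fun z i' j' => cBiv Γ P z i' j')
      = (fun z i' j' => schoutenPb P (fun z' => bVF Γ P z') z i' j') :=
    funext fun z => funext fun a => funext fun b =>
      part1 Γ hΓ hΓt P hP hPa hJac z a b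
  rw [hfun, schoutenBB]
  simp only [pd_schoutenPb Γ hΓ hΓt P hP hPa x, schoutenPb_val Γ P x]
  exact key2 (fun a b => P x a b)
    (fun m a b => pd d m (fun z => P z a b) x)
    (fun m n a b => pd d m (fun z => pd d n (fun y => P y a b) z) x)
    (fun n => bVF Γ P x n)
    (fun n a => pd d n (fun z => bVF Γ P z a) x)
    (fun m n a => pd d m (fun z => pd d n (fun y => bVF Γ P y a) z) x)
    (fun a b => hPa x a b)
    (fun m n a b => pd_comm m n x (hP a b))
    (fun m n a => pd_comm m n x (smb a))
    (fun a b c => hJac x a b c)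
    (fun m a b c => jacobi_facts P hP hJac x m a b c) i j k

end Part2
theorem loop_cocycle_is_coboundary :
    ∃ κ : ℝ, κ ≠ 0 ∧
      ∀ (d : ℕ) (Γ : Christoffel d), SmoothChristoffel Γ → Torsionfree Γ →
        ∀ P : E d → Fin d → Fin d → ℝ,
          (∀ i j, ContDiff ℝ (⊤ : ℕ∞) (fun x => P x i j)) →
          (∀ x i j, P x i j = - P x j i) →
          (∀ x i j k,
            ∑ s, (P x s i * pd d s (fun z => P z j k) x
                  + P x s j * pd d s (fun z => P z k i) x
                  + P x s k * pd d s (fun z => P z i j) x) = 0) →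
          -- c is the coboundary of κ·b …
          (∀ x i j, cBiv Γ P x i j = κ * schoutenPb P (fun z => bVF Γ P z) x i j) ∧
          -- … and in particular a Poisson 2-cocycle: [P,c]_SN = 0
          (∀ x i j k, schoutenBB P (fun z i' j' => cBiv Γ P z i' j') x i j k = 0) := by
  refine ⟨1, one_ne_zero, ?_⟩
  intro d Γ hΓ hΓt P hP hPa hJac
  constructor
  · intro x i j
    rw [one_mul]
    exact part1 Γ hΓ hΓt P hP hPa hJac x i j
  · intro x i j k
    exact part2 Γ hΓ hΓt P hP hPa hJac x i j k
end
end

section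
/- For a flat section s of (Γ(M,E), D_F) with D_F = −δ + ∇' + A (where A has polynomial degree ≥ 2 in y), s is uniquely determined by its degree-0 part s(x;0), via the recursion s = s₀ + δ^{-1}(∇' s + A·s); this recursion converges in the y-adic filtration and the resulting s satisfies D_F s = 0 whenever the flatness (D_F)² = 0 holds. -/
/- STATEMENT 19: a D_F-flat section is uniquely determined by its degree-0 part via the recursion s = s₀ + δ⁻¹(∇'s + A·s); the recursion has a unique solution, which is flat whenever the flatness (D_F)² = 0 holds. Model: formal coefficients over a chart of ℝ^d; A raises the y-degree by at least 1 (its coefficients have degree ≥ 2). -/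
noncomputable section
open scoped BigOperators

/-- formal multi-indices in the fiber variables `y` -/
abbrev MIdx (d : ℕ) := Fin d →₀ ℕ

def mdeg {d : ℕ} (α : MIdx d) : ℕ := α.sum fun _ n => n

/-- coefficients of a 1-form with values in fiberwise vector fields:
`a x i k α` = coefficient of `y^α` in `A^k_i(x;y)` -/
abbrev ACoeff (d : ℕ) := E d → Fin d → Fin d → MIdx d → ℝ

/-- coefficients of a 2-form with values in fiberwise vector fields:
`B x i j k α` = coefficient of `y^α` in `B^k_{ij}(x;y)` (antisymmetric in `i j`) -/
abbrev BCoeff (d : ℕ) := E d → Fin d → Fin d → Fin d → MIdx d → ℝ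

def SmoothACoeff {d : ℕ} (a : ACoeff d) : Prop :=
  ∀ i k α, ContDiff ℝ (⊤ : ℕ∞) (fun x => a x i k α)

/-- `δA`, the 2-form `(δA)_{ij} = ∂_{y^i}A_j − ∂_{y^j}A_i` -/
def deltaA {d : ℕ} (a : ACoeff d) : BCoeff d :=
  fun x i j k α =>
    ((α i : ℝ) + 1) * a x j k (α + Finsupp.single i 1)
      - ((α j : ℝ) + 1) * a x i k (α + Finsupp.single j 1)

/-- the curvature 2-form `R^{∇'} = −½ R^l_{ijk} dx^i ∧ dx^j y^k ∂/∂y^l` -/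
def RForm {d : ℕ} (Γ : Christoffel d) : BCoeff d :=
  fun x i j k α =>
    - ∑ l, curv Γ x k i j l * (if α = Finsupp.single l 1 then (1 : ℝ) else 0)

/-- the `k`-component of `∇'_i A_j` in coefficients -/
def nablaPrimeA {d : ℕ} (Γ : Christoffel d) (a : ACoeff d)
    (x : E d) (i j k : Fin d) (α : MIdx d) : ℝ :=
  pd d i (fun z => a z j k α) x
    - ∑ m, ∑ l,
        (if 0 < α l then
          Γ x m i l * (((α - Finsupp.single l 1 + Finsupp.single m 1 : MIdx d) m : ℕ) : ℝ)
            * a x j k (α - Finsupp.single l 1 + Finsupp.single m 1)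
         else 0)
    + ∑ m, Γ x k i m * a x j m α

/-- the `k`-component of `[A_i, A_j]` (which is `½[A,A](∂_i,∂_j)`) in coefficients -/
def brA {d : ℕ} (a : ACoeff d) (x : E d) (i j k : Fin d) (α : MIdx d) : ℝ :=
  ∑ m, ∑ βγ ∈ Finset.HasAntidiagonal.antidiagonal α,
    (a x i m βγ.1 * ((βγ.2 m : ℝ) + 1) * a x j k (βγ.2 + Finsupp.single m 1)
      - a x j m βγ.1 * ((βγ.2 m : ℝ) + 1) * a x i k (βγ.2 + Finsupp.single m 1))

/-- flatness of `D = −δ + ∇' + A`: `δA = R^{∇'} + ∇'A + ½[A,A]` -/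
def FlatEq {d : ℕ} (Γ : Christoffel d) (a : ACoeff d) : Prop :=
  ∀ x i j k α,
    deltaA a x i j k α =
      RForm Γ x i j k α + (nablaPrimeA Γ a x i j k α - nablaPrimeA Γ a x j i k α)
        + brA a x i j k α

/-- coefficients of a section of the jet bundle: `s x α` = coefficient of `y^α` -/
abbrev SCoeff (d : ℕ) := E d → MIdx d → ℝ

/-- `(δ s)_i`, coefficient form of `∂_{y^i} s` -/
def deltaS {d : ℕ} (s : SCoeff d) (x : E d) (i : Fin d) (α : MIdx d) : ℝ :=
  ((α i : ℝ) + 1) * s x (α + Finsupp.single i 1)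

/-- `(∇' s)_i` in coefficients -/
def nablaPrimeS {d : ℕ} (Γ : Christoffel d) (s : SCoeff d)
    (x : E d) (i : Fin d) (α : MIdx d) : ℝ :=
  pd d i (fun z => s z α) x
    - ∑ m, ∑ l,
        (if 0 < α l then
          Γ x m i l * (((α - Finsupp.single l 1 + Finsupp.single m 1 : MIdx d) m : ℕ) : ℝ)
            * s x (α - Finsupp.single l 1 + Finsupp.single m 1)
         else 0)

/-- `(A·s)_i = Σ_k A^k_i ∂_{y^k} s` in coefficients -/
def ASect {d : ℕ} (a : ACoeff d) (s : SCoeff d)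
    (x : E d) (i : Fin d) (α : MIdx d) : ℝ :=
  ∑ k, ∑ βγ ∈ Finset.HasAntidiagonal.antidiagonal α,
    a x i k βγ.1 * ((βγ.2 k : ℝ) + 1) * s x (βγ.2 + Finsupp.single k 1)

/-- the flat connection `D_F = −δ + ∇' + A` on sections, componentwise -/
def DFSect {d : ℕ} (Γ : Christoffel d) (a : ACoeff d) (s : SCoeff d)
    (x : E d) (i : Fin d) (α : MIdx d) : ℝ :=
  - deltaS s x i α + nablaPrimeS Γ s x i α + ASect a s x i α

/-- `δ⁻¹` of a scalar-valued 1-form, in coefficients -/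
def deltaInvS {d : ℕ} (ω : E d → Fin d → MIdx d → ℝ) : SCoeff d :=
  fun x α =>
    (1 / ((mdeg α : ℝ))) * ∑ i, if 0 < α i then ω x i (α - Finsupp.single i 1) else 0

/-- the recursion `s = s₀ + δ⁻¹(∇'s + A·s)` -/
def RecEq {d : ℕ} (Γ : Christoffel d) (a : ACoeff d) (s₀ : E d → ℝ) (s : SCoeff d) : Prop :=
  ∀ x α, s x α = (if α = 0 then s₀ x else 0)
    + deltaInvS (fun z i β => nablaPrimeS Γ s z i β + ASect a s z i β) x α

/-- flatness of a section: `D_F s = 0` -/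
def FlatSec {d : ℕ} (Γ : Christoffel d) (a : ACoeff d) (s : SCoeff d) : Prop :=
  ∀ x i α, DFSect Γ a s x i α = 0


namespace Aux
variable {d : ℕ}

lemma mdeg_eq_sum (α : MIdx d) : mdeg α = ∑ i, α i :=
  Finsupp.sum_fintype _ _ (fun _ => rfl)

lemma mdeg_add (α β : MIdx d) : mdeg (α + β) = mdeg α + mdeg β := by
  simp [mdeg_eq_sum, Finsupp.add_apply, Finset.sum_add_distrib]

lemma mdeg_single (i : Fin d) : mdeg (Finsupp.single i 1) = 1 := by
  simp [mdeg, Finsupp.sum_single_index]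

lemma mdeg_eq_zero {α : MIdx d} : mdeg α = 0 ↔ α = 0 := by
  rw [mdeg_eq_sum]
  constructor
  · intro h
    ext i
    have := Finset.sum_eq_zero_iff.mp h i (Finset.mem_univ i)
    simpa using this
  · rintro rfl; simp

lemma single_le {α : MIdx d} {i : Fin d} (h : 0 < α i) : Finsupp.single i 1 ≤ α := by
  rw [Finsupp.single_le_iff]; omega

lemma sub_single_add {α : MIdx d} {i : Fin d} (h : 0 < α i) :
    α - Finsupp.single i 1 + Finsupp.single i 1 = α :=
  tsub_add_cancel_of_le (single_le h)

lemma mdeg_sub_single {α : MIdx d} {i : Fin d} (h : 0 < α i) :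
    mdeg (α - Finsupp.single i 1) + 1 = mdeg α := by
  conv_rhs => rw [← sub_single_add h]
  rw [mdeg_add, mdeg_single]

lemma app_add_single (β : MIdx d) (i j : Fin d) :
    (β + Finsupp.single i 1 : MIdx d) j = β j + if i = j then 1 else 0 := by
  rw [Finsupp.add_apply, Finsupp.single_apply]

/-! ### pd calculus -/

lemma pd_congr {i : Fin d} {f g : E d → ℝ} (h : ∀ y, f y = g y) (x : E d) :
    pd d i f x = pd d i g x := by
  have : f = g := funext h
  rw [this]

lemma pd_const (c : ℝ) (i : Fin d) (x : E d) : pd d i (fun _ => c) x = 0 := by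
  simp [pd, fderiv_const]

lemma pd_zero (i : Fin d) (x : E d) : pd d i (fun _ => (0:ℝ)) x = 0 := pd_const 0 i x

lemma pd_add {i : Fin d} {f g : E d → ℝ} {x : E d} (hf : DifferentiableAt ℝ f x)
    (hg : DifferentiableAt ℝ g x) :
    pd d i (fun y => f y + g y) x = pd d i f x + pd d i g x := by
  simp [pd, fderiv_fun_add hf hg]

lemma pd_sub {i : Fin d} {f g : E d → ℝ} {x : E d} (hf : DifferentiableAt ℝ f x)
    (hg : DifferentiableAt ℝ g x) :
    pd d i (fun y => f y - g y) x = pd d i f x - pd d i g x := by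
  simp [pd, fderiv_fun_sub hf hg]

lemma pd_const_mul {i : Fin d} {f : E d → ℝ} {x : E d} (c : ℝ) (hf : DifferentiableAt ℝ f x) :
    pd d i (fun y => c * f y) x = c * pd d i f x := by
  simp [pd, fderiv_const_mul hf]

lemma pd_mul {i : Fin d} {f g : E d → ℝ} {x : E d} (hf : DifferentiableAt ℝ f x)
    (hg : DifferentiableAt ℝ g x) :
    pd d i (fun y => f y * g y) x = pd d i f x * g x + f x * pd d i g x := by
  simp [pd, fderiv_fun_mul hf hg]; ring

lemma pd_sum {i : Fin d} {ι : Type*} {t : Finset ι} {f : ι → E d → ℝ} {x : E d}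
    (h : ∀ j ∈ t, DifferentiableAt ℝ (f j) x) :
    pd d i (fun y => ∑ j ∈ t, f j y) x = ∑ j ∈ t, pd d i (f j) x := by
  classical
  induction t using Finset.induction_on with
  | empty => simp [pd_zero]
  | @insert b t' hj ih =>
    rw [Finset.sum_insert hj]
    have h1 : DifferentiableAt ℝ (f b) x := h b (Finset.mem_insert_self _ _)
    have h2 : DifferentiableAt ℝ (fun y => ∑ j ∈ t', f j y) x :=
      DifferentiableAt.fun_sum (fun j hjt => h j (Finset.mem_insert_of_mem hjt))
    rw [show (fun y => ∑ j ∈ insert b t', f j y) = fun y => f b y + ∑ j ∈ t', f j y from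
      funext fun y => Finset.sum_insert hj]
    rw [pd_add h1 h2, ih (fun j hjt => h j (Finset.mem_insert_of_mem hjt))]

lemma contDiff_pd {i : Fin d} {f : E d → ℝ} (hf : ContDiff ℝ (⊤ : ℕ∞) f) :
    ContDiff ℝ (⊤ : ℕ∞) (pd d i f) := by
  have h1 : ContDiff ℝ (⊤ : ℕ∞) (fun x => fderiv ℝ f x) := hf.fderiv_right (by simp)
  exact h1.clm_apply contDiff_const

lemma pd_comm {i j : Fin d} {f : E d → ℝ} (hf : ContDiff ℝ (⊤ : ℕ∞) f) (x : E d) :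
    pd d i (pd d j f) x = pd d j (pd d i f) x := by
  have hdf : Differentiable ℝ f := hf.differentiable (by simp)
  have h1 : ContDiff ℝ (⊤ : ℕ∞) (fun x => fderiv ℝ f x) := hf.fderiv_right (by simp)
  have hdf' : Differentiable ℝ (fun x => fderiv ℝ f x) := h1.differentiable (by simp)
  have key : ∀ (b : Fin d) (v : E d),
      pd d b (fun y => fderiv ℝ f y v) x
        = fderiv ℝ (fun y => fderiv ℝ f y) x (Pi.single b 1) v := by
    intro b v
    have := fderiv_clm_apply (hdf' x) (differentiableAt_const v)
    simp only [pd, this]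
    simp
  have sym := second_derivative_symmetric (f' := fun y => fderiv ℝ f y)
    (f'' := fderiv ℝ (fun y => fderiv ℝ f y) x)
    (fun y => (hdf y).hasFDerivAt) (hdf' x).hasFDerivAt
  calc pd d i (pd d j f) x
      = fderiv ℝ (fun y => fderiv ℝ f y) x (Pi.single i 1) (Pi.single j 1) := key i _
    _ = fderiv ℝ (fun y => fderiv ℝ f y) x (Pi.single j 1) (Pi.single i 1) := sym _ _
    _ = pd d j (pd d i f) x := (key j _).symm

/-! ### antidiagonal combinatorics -/

lemma AD_zero (β : MIdx d) (f : MIdx d → ℝ) :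
    ∑ uv ∈ Finset.HasAntidiagonal.antidiagonal β, (if uv.1 = 0 then f uv.2 else 0) = f β := by
  rw [Finset.sum_eq_single_of_mem ((0 : MIdx d), β)]
  · simp
  · simp [Finset.HasAntidiagonal.mem_antidiagonal]
  · rintro ⟨u, v⟩ hmem hne
    rw [Finset.HasAntidiagonal.mem_antidiagonal] at hmem
    rw [if_neg]
    rintro rfl
    simp only [zero_add] at hmem
    exact hne (by rw [hmem])

lemma AD_single (β : MIdx d) (l : Fin d) (f : MIdx d → ℝ) :
    ∑ uv ∈ Finset.HasAntidiagonal.antidiagonal β, (if uv.1 = Finsupp.single l 1 then f uv.2 else 0)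
      = if 0 < β l then f (β - Finsupp.single l 1) else 0 := by
  by_cases h : 0 < β l
  · rw [if_pos h, Finset.sum_eq_single_of_mem ((Finsupp.single l 1 : MIdx d), β - Finsupp.single l 1)]
    · simp
    · rw [Finset.HasAntidiagonal.mem_antidiagonal]
      rw [add_comm]
      exact sub_single_add h
    · rintro ⟨u, v⟩ hmem hne
      rw [Finset.HasAntidiagonal.mem_antidiagonal] at hmem
      rw [if_neg]
      rintro rfl
      apply hne
      have hv : v = β - Finsupp.single l 1 := by
        have := hmem
        rw [add_comm] at this
        have h2 : v + Finsupp.single l 1 - Finsupp.single l 1 = β - Finsupp.single l 1 := by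
          rw [this]
        rwa [add_tsub_cancel_right] at h2
      rw [hv]
  · rw [if_neg h]
    apply Finset.sum_eq_zero
    rintro ⟨u, v⟩ hmem
    rw [Finset.HasAntidiagonal.mem_antidiagonal] at hmem
    rw [if_neg]
    rintro rfl
    apply h
    have : β l = (Finsupp.single l 1 + v : MIdx d) l := by rw [hmem]
    rw [Finsupp.add_apply, Finsupp.single_apply, if_pos rfl] at this
    omega

lemma AD_fst_shift (β : MIdx d) (i : Fin d) (h : MIdx d → MIdx d → ℝ) :
    ∑ uv ∈ Finset.HasAntidiagonal.antidiagonal (β + Finsupp.single i 1 : MIdx d), (uv.1 i : ℝ) * h uv.1 uv.2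
      = ∑ uv ∈ Finset.HasAntidiagonal.antidiagonal β, ((uv.1 i : ℝ) + 1) * h (uv.1 + Finsupp.single i 1) uv.2 := by
  classical
  rw [← Finset.sum_filter_of_ne (p := fun uv => 0 < uv.1 i)
    (by rintro ⟨u, v⟩ _ hne; by_contra hc; simp only [not_lt, Nat.le_zero] at hc
        exact hne (by simp [hc]))]
  refine Finset.sum_nbij' (i := fun uv => (uv.1 - Finsupp.single i 1, uv.2))
    (j := fun uv => (uv.1 + Finsupp.single i 1, uv.2)) ?_ ?_ ?_ ?_ ?_
  · rintro ⟨u, v⟩ hm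
    simp only [Finset.mem_filter, Finset.HasAntidiagonal.mem_antidiagonal] at hm
    obtain ⟨hm, hpos⟩ := hm
    rw [Finset.HasAntidiagonal.mem_antidiagonal]
    have : (u - Finsupp.single i 1 + v) + Finsupp.single i 1 = β + Finsupp.single i 1 := by
      rw [add_right_comm, sub_single_add hpos, hm]
    exact add_right_cancel this
  · rintro ⟨u, v⟩ hm
    rw [Finset.HasAntidiagonal.mem_antidiagonal] at hm
    simp only [Finset.mem_filter, Finset.HasAntidiagonal.mem_antidiagonal]
    constructor
    · rw [add_right_comm, hm]
    · rw [app_add_single, if_pos rfl]; omega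
  · rintro ⟨u, v⟩ hm
    simp only [Finset.mem_filter, Finset.HasAntidiagonal.mem_antidiagonal] at hm
    simp [sub_single_add hm.2]
  · rintro ⟨u, v⟩ hm
    simp [add_tsub_cancel_right]
  · rintro ⟨u, v⟩ hm
    simp only [Finset.mem_filter, Finset.HasAntidiagonal.mem_antidiagonal] at hm
    obtain ⟨hm, hpos⟩ := hm
    rw [sub_single_add hpos]
    congr 1
    rw [Finsupp.tsub_apply, Finsupp.single_apply, if_pos rfl]
    have : u i - 1 + 1 = u i := Nat.succ_pred_eq_of_pos hpos
    exact_mod_cast (congrArg (Nat.cast : ℕ → ℝ) this).symm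

lemma AD_snd_shift (β : MIdx d) (i : Fin d) (h : MIdx d → MIdx d → ℝ) :
    ∑ uv ∈ Finset.HasAntidiagonal.antidiagonal (β + Finsupp.single i 1 : MIdx d), (uv.2 i : ℝ) * h uv.1 uv.2
      = ∑ uv ∈ Finset.HasAntidiagonal.antidiagonal β, ((uv.2 i : ℝ) + 1) * h uv.1 (uv.2 + Finsupp.single i 1) := by
  classical
  rw [← Finset.sum_filter_of_ne (p := fun uv => 0 < uv.2 i)
    (by rintro ⟨u, v⟩ _ hne; by_contra hc; simp only [not_lt, Nat.le_zero] at hc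
        exact hne (by simp [hc]))]
  refine Finset.sum_nbij' (i := fun uv => (uv.1, uv.2 - Finsupp.single i 1))
    (j := fun uv => (uv.1, uv.2 + Finsupp.single i 1)) ?_ ?_ ?_ ?_ ?_
  · rintro ⟨u, v⟩ hm
    simp only [Finset.mem_filter, Finset.HasAntidiagonal.mem_antidiagonal] at hm
    obtain ⟨hm, hpos⟩ := hm
    rw [Finset.HasAntidiagonal.mem_antidiagonal]
    have : (u + (v - Finsupp.single i 1)) + Finsupp.single i 1 = β + Finsupp.single i 1 := by
      rw [add_assoc, sub_single_add hpos, hm]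
    exact add_right_cancel this
  · rintro ⟨u, v⟩ hm
    rw [Finset.HasAntidiagonal.mem_antidiagonal] at hm
    simp only [Finset.mem_filter, Finset.HasAntidiagonal.mem_antidiagonal]
    constructor
    · rw [← add_assoc, hm]
    · rw [app_add_single, if_pos rfl]; omega
  · rintro ⟨u, v⟩ hm
    simp only [Finset.mem_filter, Finset.HasAntidiagonal.mem_antidiagonal] at hm
    simp [sub_single_add hm.2]
  · rintro ⟨u, v⟩ hm
    simp [add_tsub_cancel_right]
  · rintro ⟨u, v⟩ hm
    simp only [Finset.mem_filter, Finset.HasAntidiagonal.mem_antidiagonal] at hm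
    obtain ⟨hm, hpos⟩ := hm
    rw [sub_single_add hpos]
    congr 1
    rw [Finsupp.tsub_apply, Finsupp.single_apply, if_pos rfl]
    have : v i - 1 + 1 = v i := Nat.succ_pred_eq_of_pos hpos
    exact_mod_cast (congrArg (Nat.cast : ℕ → ℝ) this).symm

lemma AD_shift (β : MIdx d) (i : Fin d) (h : MIdx d → MIdx d → ℝ) :
    ((β i : ℝ) + 1) * ∑ uv ∈ Finset.HasAntidiagonal.antidiagonal (β + Finsupp.single i 1 : MIdx d), h uv.1 uv.2
      = (∑ uv ∈ Finset.HasAntidiagonal.antidiagonal β, ((uv.1 i : ℝ) + 1) * h (uv.1 + Finsupp.single i 1) uv.2)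
        + ∑ uv ∈ Finset.HasAntidiagonal.antidiagonal β, ((uv.2 i : ℝ) + 1) * h uv.1 (uv.2 + Finsupp.single i 1) := by
  rw [← AD_fst_shift, ← AD_snd_shift, Finset.mul_sum, ← Finset.sum_add_distrib]
  apply Finset.sum_congr rfl
  rintro ⟨u, v⟩ hm
  rw [Finset.HasAntidiagonal.mem_antidiagonal] at hm
  have : u i + v i = β i + 1 := by
    have : (u + v : MIdx d) i = (β + Finsupp.single i 1 : MIdx d) i := by rw [hm]
    rw [Finsupp.add_apply, app_add_single, if_pos rfl] at this
    omega
  have hc : (β i : ℝ) + 1 = (u i : ℝ) + (v i : ℝ) := by exact_mod_cast by omega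
  rw [hc]; ring

lemma AD_assoc (β : MIdx d) (F : MIdx d → MIdx d → MIdx d → ℝ) :
    ∑ uv ∈ Finset.HasAntidiagonal.antidiagonal β, ∑ pq ∈ Finset.HasAntidiagonal.antidiagonal uv.2, F uv.1 pq.1 pq.2
      = ∑ uv ∈ Finset.HasAntidiagonal.antidiagonal β, ∑ pq ∈ Finset.HasAntidiagonal.antidiagonal uv.1, F pq.1 pq.2 uv.2 := by
  rw [Finset.sum_sigma', Finset.sum_sigma']
  refine Finset.sum_nbij' (i := fun x => ⟨(x.1.1 + x.2.1, x.2.2), (x.1.1, x.2.1)⟩)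
    (j := fun x => ⟨(x.2.1, x.2.2 + x.1.2), (x.2.2, x.1.2)⟩) ?_ ?_ ?_ ?_ ?_
  · rintro ⟨⟨u, v⟩, p, q⟩ hm
    simp only [Finset.mem_sigma, Finset.HasAntidiagonal.mem_antidiagonal] at hm ⊢
    obtain ⟨h1, h2⟩ := hm
    exact ⟨by rw [add_assoc, h2, h1], trivial⟩
  · rintro ⟨⟨w, q⟩, u, p⟩ hm
    simp only [Finset.mem_sigma, Finset.HasAntidiagonal.mem_antidiagonal] at hm ⊢
    obtain ⟨h1, h2⟩ := hm
    exact ⟨by rw [← add_assoc, h2, h1], trivial⟩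
  · rintro ⟨⟨u, v⟩, p, q⟩ hm
    simp only [Finset.mem_sigma, Finset.HasAntidiagonal.mem_antidiagonal] at hm
    obtain ⟨h1, h2⟩ := hm
    simp [h2]
  · rintro ⟨⟨w, q⟩, u, p⟩ hm
    simp only [Finset.mem_sigma, Finset.HasAntidiagonal.mem_antidiagonal] at hm
    obtain ⟨h1, h2⟩ := hm
    simp [h2]
  · rintro ⟨⟨u, v⟩, p, q⟩ hm
    rfl

lemma AD_swap (β : MIdx d) (F : MIdx d → MIdx d → MIdx d → ℝ) :
    ∑ uv ∈ Finset.HasAntidiagonal.antidiagonal β, ∑ pq ∈ Finset.HasAntidiagonal.antidiagonal uv.2, F uv.1 pq.1 pq.2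
      = ∑ uv ∈ Finset.HasAntidiagonal.antidiagonal β, ∑ pq ∈ Finset.HasAntidiagonal.antidiagonal uv.2, F pq.1 uv.1 pq.2 := by
  rw [Finset.sum_sigma', Finset.sum_sigma']
  refine Finset.sum_nbij' (i := fun x => ⟨(x.2.1, x.1.1 + x.2.2), (x.1.1, x.2.2)⟩)
    (j := fun x => ⟨(x.2.1, x.1.1 + x.2.2), (x.1.1, x.2.2)⟩) ?_ ?_ ?_ ?_ ?_
  · rintro ⟨⟨u, v⟩, p, q⟩ hm
    simp only [Finset.mem_sigma, Finset.HasAntidiagonal.mem_antidiagonal] at hm ⊢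
    obtain ⟨h1, h2⟩ := hm
    exact ⟨by rw [add_left_comm, h2, h1], trivial⟩
  · rintro ⟨⟨u, v⟩, p, q⟩ hm
    simp only [Finset.mem_sigma, Finset.HasAntidiagonal.mem_antidiagonal] at hm ⊢
    obtain ⟨h1, h2⟩ := hm
    exact ⟨by rw [add_left_comm, h2, h1], trivial⟩
  · rintro ⟨⟨u, v⟩, p, q⟩ hm
    simp only [Finset.mem_sigma, Finset.HasAntidiagonal.mem_antidiagonal] at hm
    obtain ⟨h1, h2⟩ := hm
    simp [h2]
  · rintro ⟨⟨u, v⟩, p, q⟩ hm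
    simp only [Finset.mem_sigma, Finset.HasAntidiagonal.mem_antidiagonal] at hm
    obtain ⟨h1, h2⟩ := hm
    simp [h2]
  · rintro ⟨⟨u, v⟩, p, q⟩ hm
    rfl

/-! ### fiberwise vector field actions -/

/-- coefficients of a fiberwise vector field at a point -/
abbrev Vc (d : ℕ) := Fin d → MIdx d → ℝ

/-- action of a fiberwise vector field on a fiberwise function, coefficientwise -/
def Vact (V : Vc d) (t : MIdx d → ℝ) (β : MIdx d) : ℝ :=
  ∑ uv ∈ Finset.HasAntidiagonal.antidiagonal β, ∑ k,
    V k uv.1 * ((uv.2 k : ℝ) + 1) * t (uv.2 + Finsupp.single k 1)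

/-- `V^m ∂_m W^k`: first-order part of the composition of vector fields -/
def Pc (V W : Vc d) : Vc d := fun k γ =>
  ∑ uv ∈ Finset.HasAntidiagonal.antidiagonal γ, ∑ m,
    V m uv.1 * ((uv.2 m : ℝ) + 1) * W k (uv.2 + Finsupp.single m 1)

/-- second-order part of the composition of two vector field actions -/
def Qd (V W : Vc d) (t : MIdx d → ℝ) (β : MIdx d) : ℝ :=
  ∑ uv ∈ Finset.HasAntidiagonal.antidiagonal β, ∑ pq ∈ Finset.HasAntidiagonal.antidiagonal uv.2, ∑ k, ∑ m,
    V k uv.1 * W m pq.1 * (((pq.2 k : ℝ) + 1) * (((pq.2 + Finsupp.single k 1 : MIdx d) m : ℝ) + 1))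
      * t (pq.2 + Finsupp.single k 1 + Finsupp.single m 1)

lemma Vact_comp (V W : Vc d) (t : MIdx d → ℝ) (β : MIdx d) :
    Vact V (fun γ => Vact W t γ) β = Vact (Pc V W) t β + Qd V W t β := by
  have expand : ∀ uv ∈ Finset.HasAntidiagonal.antidiagonal β, ∀ k : Fin d,
      V k uv.1 * ((uv.2 k : ℝ) + 1) * Vact W t (uv.2 + Finsupp.single k 1)
        = V k uv.1 * ((∑ pq ∈ Finset.HasAntidiagonal.antidiagonal uv.2, ((pq.1 k : ℝ) + 1) *
            (∑ m, W m (pq.1 + Finsupp.single k 1) * ((pq.2 m : ℝ) + 1)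
              * t (pq.2 + Finsupp.single m 1)))
          + ∑ pq ∈ Finset.HasAntidiagonal.antidiagonal uv.2, ((pq.2 k : ℝ) + 1) *
            (∑ m, W m pq.1 * (((pq.2 + Finsupp.single k 1 : MIdx d) m : ℝ) + 1)
              * t (pq.2 + Finsupp.single k 1 + Finsupp.single m 1))) := by
    intro uv _ k
    rw [mul_assoc]
    congr 1
    exact AD_shift uv.2 k
      (fun p q => ∑ m, W m p * ((q m : ℝ) + 1) * t (q + Finsupp.single m 1))
  have lhs_eq : Vact V (fun γ => Vact W t γ) β
      = ∑ uv ∈ Finset.HasAntidiagonal.antidiagonal β, ∑ k,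
          V k uv.1 * ((uv.2 k : ℝ) + 1) * Vact W t (uv.2 + Finsupp.single k 1) := rfl
  rw [lhs_eq]
  rw [Finset.sum_congr rfl (fun uv hm => Finset.sum_congr rfl (fun k _ => expand uv hm k))]
  have split : ∀ uv ∈ Finset.HasAntidiagonal.antidiagonal β,
      (∑ k : Fin d, V k uv.1 * ((∑ pq ∈ Finset.HasAntidiagonal.antidiagonal uv.2, ((pq.1 k : ℝ) + 1) *
            (∑ m, W m (pq.1 + Finsupp.single k 1) * ((pq.2 m : ℝ) + 1)
              * t (pq.2 + Finsupp.single m 1)))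
          + ∑ pq ∈ Finset.HasAntidiagonal.antidiagonal uv.2, ((pq.2 k : ℝ) + 1) *
            (∑ m, W m pq.1 * (((pq.2 + Finsupp.single k 1 : MIdx d) m : ℝ) + 1)
              * t (pq.2 + Finsupp.single k 1 + Finsupp.single m 1))))
      = (∑ pq ∈ Finset.HasAntidiagonal.antidiagonal uv.2, ∑ k, ∑ m,
          V k uv.1 * ((pq.1 k : ℝ) + 1) * (W m (pq.1 + Finsupp.single k 1) * ((pq.2 m : ℝ) + 1)
              * t (pq.2 + Finsupp.single m 1)))
        + ∑ pq ∈ Finset.HasAntidiagonal.antidiagonal uv.2, ∑ k, ∑ m,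
            V k uv.1 * W m pq.1
              * (((pq.2 k : ℝ) + 1) * (((pq.2 + Finsupp.single k 1 : MIdx d) m : ℝ) + 1))
              * t (pq.2 + Finsupp.single k 1 + Finsupp.single m 1) := by
    intro uv _
    rw [Finset.sum_congr rfl (fun k (_ : k ∈ Finset.univ) => mul_add (V k uv.1) _ _),
      Finset.sum_add_distrib]
    congr 1
    · rw [Finset.sum_congr rfl (fun k (_ : k ∈ Finset.univ) => Finset.mul_sum _ _ _),
        Finset.sum_comm]
      apply Finset.sum_congr rfl; intro pq _
      apply Finset.sum_congr rfl; intro k _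
      rw [Finset.mul_sum, Finset.mul_sum]
      apply Finset.sum_congr rfl; intro m _
      ring
    · rw [Finset.sum_congr rfl (fun k (_ : k ∈ Finset.univ) => Finset.mul_sum _ _ _),
        Finset.sum_comm]
      apply Finset.sum_congr rfl; intro pq _
      apply Finset.sum_congr rfl; intro k _
      rw [Finset.mul_sum, Finset.mul_sum]
      apply Finset.sum_congr rfl; intro m _
      ring
  rw [Finset.sum_congr rfl split, Finset.sum_add_distrib]
  congr 1
  · rw [AD_assoc β (fun u p q => ∑ k, ∑ m,
      V k u * ((p k : ℝ) + 1) * (W m (p + Finsupp.single k 1) * ((q m : ℝ) + 1)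
        * t (q + Finsupp.single m 1)))]
    have rhs_eq : Vact (Pc V W) t β
        = ∑ uv ∈ Finset.HasAntidiagonal.antidiagonal β, ∑ m,
            (∑ pq ∈ Finset.HasAntidiagonal.antidiagonal uv.1, ∑ k,
              V k pq.1 * ((pq.2 k : ℝ) + 1) * W m (pq.2 + Finsupp.single k 1))
              * ((uv.2 m : ℝ) + 1) * t (uv.2 + Finsupp.single m 1) := rfl
    rw [rhs_eq]
    apply Finset.sum_congr rfl; intro uv _
    rw [Finset.sum_congr rfl (fun pq (_ : pq ∈ Finset.HasAntidiagonal.antidiagonal uv.1) =>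
      Finset.sum_comm (s := Finset.univ) (t := Finset.univ)
        (f := fun k m => V k pq.1 * ((pq.2 k : ℝ) + 1)
          * (W m (pq.2 + Finsupp.single k 1) * ((uv.2 m : ℝ) + 1)
            * t (uv.2 + Finsupp.single m 1)))), Finset.sum_comm]
    apply Finset.sum_congr rfl; intro m _
    rw [Finset.sum_mul, Finset.sum_mul]
    apply Finset.sum_congr rfl; intro pq _
    rw [Finset.sum_mul, Finset.sum_mul]
    apply Finset.sum_congr rfl; intro k _
    ring

lemma Csym (q : MIdx d) (k m : Fin d) :
    (((q k : ℝ) + 1) * (((q + Finsupp.single k 1 : MIdx d) m : ℝ) + 1))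
      = ((q m : ℝ) + 1) * (((q + Finsupp.single m 1 : MIdx d) k : ℝ) + 1) := by
  rcases eq_or_ne k m with rfl | hne
  · ring
  · rw [app_add_single, app_add_single, if_neg hne, if_neg (Ne.symm hne)]
    push_cast
    ring

lemma Qd_symm (V W : Vc d) (t : MIdx d → ℝ) (β : MIdx d) :
    Qd V W t β = Qd W V t β := by
  unfold Qd
  conv_rhs =>
    rw [AD_swap β (fun u p q => ∑ k, ∑ m, W k u * V m p
      * (((q k : ℝ) + 1) * (((q + Finsupp.single k 1 : MIdx d) m : ℝ) + 1))
      * t (q + Finsupp.single k 1 + Finsupp.single m 1))]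
  apply Finset.sum_congr rfl; intro uv _
  apply Finset.sum_congr rfl; intro pq _
  rw [Finset.sum_comm]
  apply Finset.sum_congr rfl; intro k _
  apply Finset.sum_congr rfl; intro m _
  rw [Csym pq.2 m k, add_right_comm]
  ring

/-- the coefficient field of `∂_{y^i}` -/
def Ec (i : Fin d) : Vc d := fun k γ => if k = i ∧ γ = 0 then 1 else 0

lemma Vact_E (i : Fin d) (t : MIdx d → ℝ) (β : MIdx d) :
    Vact (Ec i) t β = ((β i : ℝ) + 1) * t (β + Finsupp.single i 1) := by
  unfold Vact Ec
  have inner : ∀ uv ∈ Finset.HasAntidiagonal.antidiagonal β,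
      (∑ k, (if k = i ∧ uv.1 = 0 then (1:ℝ) else 0) * ((uv.2 k : ℝ) + 1)
        * t (uv.2 + Finsupp.single k 1))
      = (if uv.1 = 0 then ((uv.2 i : ℝ) + 1) * t (uv.2 + Finsupp.single i 1) else 0) := by
    rintro ⟨u, v⟩ _
    rw [Finset.sum_eq_single_of_mem i (Finset.mem_univ i)]
    · by_cases h : u = 0 <;> simp [h]
    · intro b _ hb
      rw [if_neg (by rintro ⟨rfl, -⟩; exact hb rfl)]
      ring
  rw [Finset.sum_congr rfl inner,
    AD_zero β (fun v => ((v i : ℝ) + 1) * t (v + Finsupp.single i 1))]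

lemma Pc_E (i : Fin d) (W : Vc d) (k : Fin d) (γ : MIdx d) :
    Pc (Ec i) W k γ = ((γ i : ℝ) + 1) * W k (γ + Finsupp.single i 1) := by
  unfold Pc Ec
  have inner : ∀ uv ∈ Finset.HasAntidiagonal.antidiagonal γ,
      (∑ m, (if m = i ∧ uv.1 = 0 then (1:ℝ) else 0) * ((uv.2 m : ℝ) + 1)
        * W k (uv.2 + Finsupp.single m 1))
      = (if uv.1 = 0 then ((uv.2 i : ℝ) + 1) * W k (uv.2 + Finsupp.single i 1) else 0) := by
    rintro ⟨u, v⟩ _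
    rw [Finset.sum_eq_single_of_mem i (Finset.mem_univ i)]
    · by_cases h : u = 0 <;> simp [h]
    · intro b _ hb
      rw [if_neg (by rintro ⟨rfl, -⟩; exact hb rfl)]
      ring
  rw [Finset.sum_congr rfl inner,
    AD_zero γ (fun v => ((v i : ℝ) + 1) * W k (v + Finsupp.single i 1))]

lemma Pc_E_right (i : Fin d) (W : Vc d) (k : Fin d) (γ : MIdx d) :
    Pc W (Ec i) k γ = 0 := by
  unfold Pc Ec
  apply Finset.sum_eq_zero; rintro ⟨u, v⟩ _
  apply Finset.sum_eq_zero; intro m _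
  rw [if_neg, mul_zero]
  rintro ⟨-, h⟩
  have : ((v + Finsupp.single m 1 : MIdx d)) m = 0 := by rw [h]; rfl
  rw [app_add_single, if_pos rfl] at this
  omega

/-! ### bridges to the statement's operators -/

lemma AD_zero_snd (β : MIdx d) (f : MIdx d → ℝ) :
    ∑ uv ∈ Finset.HasAntidiagonal.antidiagonal β, (if uv.2 = 0 then f uv.1 else 0) = f β := by
  rw [Finset.sum_eq_single_of_mem (β, (0 : MIdx d))]
  · simp
  · simp [Finset.HasAntidiagonal.mem_antidiagonal]
  · rintro ⟨u, v⟩ hmem hne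
    rw [Finset.HasAntidiagonal.mem_antidiagonal] at hmem
    rw [if_neg]
    rintro rfl
    simp only [add_zero] at hmem
    exact hne (by rw [hmem])

lemma add_single_eq_single {v : MIdx d} {m l : Fin d} :
    v + Finsupp.single m 1 = Finsupp.single l 1 ↔ v = 0 ∧ m = l := by
  constructor
  · intro h
    have hd : mdeg v + 1 = 1 := by
      have := congrArg mdeg h
      rwa [mdeg_add, mdeg_single, mdeg_single] at this
    have hv : v = 0 := mdeg_eq_zero.mp (by omega)
    subst hv
    rw [zero_add] at h
    rcases (Finsupp.single_eq_single_iff _ _ _ _).mp h with ⟨h1, -⟩ | ⟨h1, -⟩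
    · exact ⟨rfl, h1⟩
    · omega
  · rintro ⟨rfl, rfl⟩
    simp

/-- vector field coefficients of the 1-form `A` at a point, in direction `i` -/
def aV (a : ACoeff d) (x : E d) (i : Fin d) : Vc d := fun k γ => a x i k γ

/-- the coefficient field of the operator `Γ^m_{il} y^l ∂_{y^m}` at `x`, direction `i` -/
def gC (Γ : Christoffel d) (x : E d) (i : Fin d) : Vc d :=
  fun k γ => ∑ l, Γ x k i l * (if γ = Finsupp.single l 1 then 1 else 0)

lemma Pc_apply (V W : Vc d) (k : Fin d) (γ : MIdx d) :
    Pc V W k γ = Vact V (fun γ' => W k γ') γ := rfl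

lemma Vact_gC (Γ : Christoffel d) (x : E d) (i : Fin d) (t : MIdx d → ℝ) (β : MIdx d) :
    Vact (gC Γ x i) t β
      = ∑ m, ∑ l, (if 0 < β l then
          Γ x m i l * (((β - Finsupp.single l 1 + Finsupp.single m 1 : MIdx d) m : ℕ) : ℝ)
            * t (β - Finsupp.single l 1 + Finsupp.single m 1) else 0) := by
  unfold Vact gC
  have step1 : ∀ uv ∈ Finset.HasAntidiagonal.antidiagonal β, ∀ k : Fin d,
      (∑ l, Γ x k i l * (if uv.1 = Finsupp.single l 1 then (1:ℝ) else 0))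
          * ((uv.2 k : ℝ) + 1) * t (uv.2 + Finsupp.single k 1)
        = ∑ l, (if uv.1 = Finsupp.single l 1 then
            Γ x k i l * ((uv.2 k : ℝ) + 1) * t (uv.2 + Finsupp.single k 1) else 0) := by
    rintro ⟨u, v⟩ _ k
    rw [Finset.sum_mul, Finset.sum_mul]
    apply Finset.sum_congr rfl; intro l _
    by_cases h : u = Finsupp.single l 1 <;> simp [h]
  rw [Finset.sum_congr rfl (fun uv hm => Finset.sum_congr rfl (fun k _ => step1 uv hm k))]
  rw [Finset.sum_comm]
  apply Finset.sum_congr rfl; intro k _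
  rw [Finset.sum_comm]
  apply Finset.sum_congr rfl; intro l _
  rw [AD_single β l (fun v => Γ x k i l * ((v k : ℝ) + 1) * t (v + Finsupp.single k 1))]
  by_cases h : 0 < β l
  · rw [if_pos h, if_pos h]
    have : (((β - Finsupp.single l 1 + Finsupp.single k 1 : MIdx d) k : ℕ) : ℝ)
        = (((β - Finsupp.single l 1 : MIdx d) k : ℕ) : ℝ) + 1 := by
      rw [app_add_single, if_pos rfl]
      push_cast
      ring
    rw [this]
  · rw [if_neg h, if_neg h]

lemma nablaPrimeS_eq (Γ : Christoffel d) (s : SCoeff d) (x : E d) (i : Fin d) (β : MIdx d) :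
    nablaPrimeS Γ s x i β = pd d i (fun z => s z β) x - Vact (gC Γ x i) (s x) β := by
  unfold nablaPrimeS
  rw [Vact_gC]

lemma ASect_eq (a : ACoeff d) (s : SCoeff d) (x : E d) (i : Fin d) (β : MIdx d) :
    ASect a s x i β = Vact (aV a x i) (s x) β := by
  unfold ASect Vact aV
  rw [Finset.sum_comm]

lemma deltaS_eq (s : SCoeff d) (x : E d) (i : Fin d) (β : MIdx d) :
    deltaS s x i β = Vact (Ec i) (s x) β := by
  rw [Vact_E]; rfl

lemma Pc_aV_gC (Γ : Christoffel d) (a : ACoeff d) (x : E d) (i j : Fin d)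
    (k : Fin d) (α : MIdx d) :
    Pc (aV a x j) (gC Γ x i) k α = ∑ m, Γ x k i m * a x j m α := by
  unfold Pc aV gC
  have step1 : ∀ uv ∈ Finset.HasAntidiagonal.antidiagonal α, ∀ m : Fin d,
      a x j m uv.1 * ((uv.2 m : ℝ) + 1)
          * (∑ l, Γ x k i l * (if uv.2 + Finsupp.single m 1 = Finsupp.single l 1 then (1:ℝ) else 0))
        = (if uv.2 = 0 then Γ x k i m * a x j m uv.1 else 0) := by
    rintro ⟨u, v⟩ _ m
    dsimp only
    by_cases h : v = (0 : MIdx d)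
    · subst h
      rw [if_pos rfl, Finset.sum_eq_single_of_mem m (Finset.mem_univ m)]
      · rw [if_pos (add_single_eq_single.mpr ⟨rfl, rfl⟩)]
        have h0 : (((0 : MIdx d) m : ℕ) : ℝ) = 0 := by simp
        rw [h0]
        ring
      · intro b _ hb
        rw [if_neg (fun hc => hb (add_single_eq_single.mp hc).2.symm), mul_zero]
    · rw [if_neg h]
      have : ∀ l ∈ Finset.univ, Γ x k i l
          * (if v + Finsupp.single m 1 = Finsupp.single l 1 then (1:ℝ) else 0) = 0 := by
        intro l _
        rw [if_neg (fun hc => h (add_single_eq_single.mp hc).1), mul_zero]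
      rw [Finset.sum_congr rfl this, Finset.sum_const_zero, mul_zero]
  rw [Finset.sum_congr rfl (fun uv hm => Finset.sum_congr rfl (fun m _ => step1 uv hm m))]
  rw [Finset.sum_comm]
  apply Finset.sum_congr rfl; intro m _
  exact AD_zero_snd α (fun u => Γ x k i m * a x j m u)

lemma nablaPrimeA_eq (Γ : Christoffel d) (a : ACoeff d) (x : E d) (i j : Fin d)
    (k : Fin d) (α : MIdx d) :
    nablaPrimeA Γ a x i j k α
      = pd d i (fun z => a z j k α) x - Pc (gC Γ x i) (aV a x j) k α
        + Pc (aV a x j) (gC Γ x i) k α := by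
  unfold nablaPrimeA
  rw [Pc_aV_gC]
  congr 2
  rw [Pc_apply]
  have := Vact_gC Γ x i (fun γ => a x j k γ) α
  exact this.symm

/-! ### linearity and smoothness -/

lemma Vact_sub (V : Vc d) (t u : MIdx d → ℝ) (β : MIdx d) :
    Vact V (fun γ => t γ - u γ) β = Vact V t β - Vact V u β := by
  unfold Vact
  rw [← Finset.sum_sub_distrib]
  apply Finset.sum_congr rfl; intro uv _
  rw [← Finset.sum_sub_distrib]
  apply Finset.sum_congr rfl; intro k _
  ring

lemma Vact_subV (V W : Vc d) (t : MIdx d → ℝ) (β : MIdx d) :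
    Vact (fun k γ => V k γ - W k γ) t β = Vact V t β - Vact W t β := by
  unfold Vact
  rw [← Finset.sum_sub_distrib]
  apply Finset.sum_congr rfl; intro uv _
  rw [← Finset.sum_sub_distrib]
  apply Finset.sum_congr rfl; intro k _
  ring

lemma Vact_addV (V W : Vc d) (t : MIdx d → ℝ) (β : MIdx d) :
    Vact (fun k γ => V k γ + W k γ) t β = Vact V t β + Vact W t β := by
  unfold Vact
  rw [← Finset.sum_add_distrib]
  apply Finset.sum_congr rfl; intro uv _
  rw [← Finset.sum_add_distrib]
  apply Finset.sum_congr rfl; intro k _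
  ring

lemma Vact_congrV {V W : Vc d} (h : ∀ k γ, V k γ = W k γ) (t : MIdx d → ℝ) (β : MIdx d) :
    Vact V t β = Vact W t β := by
  have : V = W := funext fun k => funext fun γ => h k γ
  rw [this]

lemma pd_mul_const {i : Fin d} {f : E d → ℝ} {x : E d} (c : ℝ) (hf : DifferentiableAt ℝ f x) :
    pd d i (fun y => f y * c) x = pd d i f x * c := by
  rw [show (fun y => f y * c) = fun y => c * f y from funext fun y => mul_comm _ _,
    pd_const_mul c hf]
  ring

lemma pd_Vact {i : Fin d} {V : E d → Vc d} {t : E d → MIdx d → ℝ} {x : E d} (β : MIdx d)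
    (hV : ∀ k γ, DifferentiableAt ℝ (fun z => V z k γ) x)
    (ht : ∀ γ, DifferentiableAt ℝ (fun z => t z γ) x) :
    pd d i (fun z => Vact (V z) (t z) β) x
      = Vact (fun k γ => pd d i (fun z => V z k γ) x) (t x) β
        + Vact (V x) (fun γ => pd d i (fun z => t z γ) x) β := by
  unfold Vact
  have hterm : ∀ (uv : MIdx d × MIdx d) (k : Fin d), DifferentiableAt ℝ
      (fun z => V z k uv.1 * ((uv.2 k : ℝ) + 1) * t z (uv.2 + Finsupp.single k 1)) x :=
    fun uv k => (((hV k uv.1).mul_const _).mul (ht _))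
  rw [pd_sum (f := fun uv z => ∑ k, V z k uv.1 * ((uv.2 k : ℝ) + 1)
      * t z (uv.2 + Finsupp.single k 1))
    (fun uv _ => DifferentiableAt.fun_sum (fun k _ => hterm uv k))]
  rw [← Finset.sum_add_distrib]
  apply Finset.sum_congr rfl; intro uv _
  rw [pd_sum (f := fun k z => V z k uv.1 * ((uv.2 k : ℝ) + 1)
      * t z (uv.2 + Finsupp.single k 1)) (fun k _ => hterm uv k)]
  rw [← Finset.sum_add_distrib]
  apply Finset.sum_congr rfl; intro k _
  rw [pd_mul ((hV k uv.1).mul_const _) (ht _), pd_mul_const _ (hV k uv.1)]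

lemma contDiff_Vact {V : E d → Vc d} {t : E d → MIdx d → ℝ} (β : MIdx d)
    (hV : ∀ k γ, ContDiff ℝ (⊤ : ℕ∞) (fun z => V z k γ))
    (ht : ∀ γ, ContDiff ℝ (⊤ : ℕ∞) (fun z => t z γ)) :
    ContDiff ℝ (⊤ : ℕ∞) (fun z => Vact (V z) (t z) β) := by
  unfold Vact
  apply ContDiff.sum; intro uv _
  apply ContDiff.sum; intro k _
  exact ((hV k uv.1).mul contDiff_const).mul (ht _)

lemma contDiff_gC {Γ : Christoffel d} (hΓ : SmoothChristoffel Γ) (i k : Fin d) (γ : MIdx d) :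
    ContDiff ℝ (⊤ : ℕ∞) (fun z => gC Γ z i k γ) := by
  unfold gC
  apply ContDiff.sum; intro l _
  exact (hΓ k i l).mul contDiff_const

lemma contDiff_deltaS {s : SCoeff d} (hs : ∀ γ, ContDiff ℝ (⊤ : ℕ∞) (fun z => s z γ))
    (i : Fin d) (β : MIdx d) : ContDiff ℝ (⊤ : ℕ∞) (fun z => deltaS s z i β) := by
  unfold deltaS
  exact contDiff_const.mul (hs _)

lemma contDiff_nablaPrimeS {Γ : Christoffel d} (hΓ : SmoothChristoffel Γ) {s : SCoeff d}
    (hs : ∀ γ, ContDiff ℝ (⊤ : ℕ∞) (fun z => s z γ)) (i : Fin d) (β : MIdx d) :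
    ContDiff ℝ (⊤ : ℕ∞) (fun z => nablaPrimeS Γ s z i β) := by
  have : (fun z => nablaPrimeS Γ s z i β)
      = fun z => pd d i (fun w => s w β) z - Vact (gC Γ z i) (s z) β :=
    funext fun z => nablaPrimeS_eq Γ s z i β
  rw [this]
  exact (contDiff_pd (hs β)).sub (contDiff_Vact β (contDiff_gC hΓ i) hs)

lemma contDiff_ASect {a : ACoeff d} (ha : SmoothACoeff a) {s : SCoeff d}
    (hs : ∀ γ, ContDiff ℝ (⊤ : ℕ∞) (fun z => s z γ)) (i : Fin d) (β : MIdx d) :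
    ContDiff ℝ (⊤ : ℕ∞) (fun z => ASect a s z i β) := by
  have : (fun z => ASect a s z i β) = fun z => Vact (aV a z i) (s z) β :=
    funext fun z => ASect_eq a s z i β
  rw [this]
  exact contDiff_Vact β (fun k γ => ha i k γ) hs

/-! ### auxiliary Vact computations -/

lemma Vact_zeroV (t : MIdx d → ℝ) (β : MIdx d) :
    Vact (fun _ _ => (0:ℝ)) t β = 0 := by
  unfold Vact
  apply Finset.sum_eq_zero; intro uv _
  apply Finset.sum_eq_zero; intro k _
  ring

lemma Vact_zero_supp (c : Fin d → ℝ) (t : MIdx d → ℝ) (β : MIdx d) :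
    Vact (fun k γ => c k * (if γ = 0 then 1 else 0)) t β
      = ∑ k, c k * (((β k : ℝ) + 1) * t (β + Finsupp.single k 1)) := by
  unfold Vact
  have step : ∀ uv ∈ Finset.HasAntidiagonal.antidiagonal β, ∀ k : Fin d,
      c k * (if uv.1 = 0 then (1:ℝ) else 0) * ((uv.2 k : ℝ) + 1) * t (uv.2 + Finsupp.single k 1)
        = (if uv.1 = 0 then c k * (((uv.2 k : ℝ) + 1) * t (uv.2 + Finsupp.single k 1)) else 0) := by
    rintro ⟨u, v⟩ _ k
    by_cases h : u = 0 <;> simp [h] <;> ring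
  rw [Finset.sum_congr rfl (fun uv hm => Finset.sum_congr rfl (fun k _ => step uv hm k))]
  rw [Finset.sum_comm]
  apply Finset.sum_congr rfl; intro k _
  exact AD_zero β (fun v => c k * (((v k : ℝ) + 1) * t (v + Finsupp.single k 1)))

lemma Pc_gC_right (Γ : Christoffel d) (x : E d) (i : Fin d) (V : Vc d)
    (k : Fin d) (α : MIdx d) :
    Pc V (gC Γ x i) k α = ∑ m, Γ x k i m * V m α := by
  unfold Pc gC
  have step1 : ∀ uv ∈ Finset.HasAntidiagonal.antidiagonal α, ∀ m : Fin d,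
      V m uv.1 * ((uv.2 m : ℝ) + 1)
          * (∑ l, Γ x k i l * (if uv.2 + Finsupp.single m 1 = Finsupp.single l 1 then (1:ℝ) else 0))
        = (if uv.2 = 0 then Γ x k i m * V m uv.1 else 0) := by
    rintro ⟨u, v⟩ _ m
    dsimp only
    by_cases h : v = (0 : MIdx d)
    · subst h
      rw [if_pos rfl, Finset.sum_eq_single_of_mem m (Finset.mem_univ m)]
      · rw [if_pos (add_single_eq_single.mpr ⟨rfl, rfl⟩)]
        have h0 : (((0 : MIdx d) m : ℕ) : ℝ) = 0 := by simp
        rw [h0]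
        ring
      · intro b _ hb
        rw [if_neg (fun hc => hb (add_single_eq_single.mp hc).2.symm), mul_zero]
    · rw [if_neg h]
      have : ∀ l ∈ Finset.univ, Γ x k i l
          * (if v + Finsupp.single m 1 = Finsupp.single l 1 then (1:ℝ) else 0) = 0 := by
        intro l _
        rw [if_neg (fun hc => h (add_single_eq_single.mp hc).1), mul_zero]
      rw [Finset.sum_congr rfl this, Finset.sum_const_zero, mul_zero]
  rw [Finset.sum_congr rfl (fun uv hm => Finset.sum_congr rfl (fun m _ => step1 uv hm m))]
  rw [Finset.sum_comm]
  apply Finset.sum_congr rfl; intro m _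
  exact AD_zero_snd α (fun u => Γ x k i m * V m u)

lemma Pc_E_gC (Γ : Christoffel d) (x : E d) (i j : Fin d) (k : Fin d) (γ : MIdx d) :
    Pc (Ec i) (gC Γ x j) k γ = Γ x k j i * (if γ = 0 then 1 else 0) := by
  rw [Pc_E]
  unfold gC
  by_cases h : γ = 0
  · subst h
    rw [if_pos rfl, Finset.sum_eq_single_of_mem i (Finset.mem_univ i)]
    · rw [if_pos (by rw [zero_add])]
      have h0 : (((0 : MIdx d) i : ℕ) : ℝ) = 0 := by simp
      rw [h0]
      ring
    · intro b _ hb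
      rw [if_neg (fun hc => hb (add_single_eq_single.mp hc).2.symm), mul_zero]
  · rw [if_neg h]
    have : ∀ l ∈ Finset.univ, Γ x k j l
        * (if γ + Finsupp.single i 1 = Finsupp.single l 1 then (1:ℝ) else 0) = 0 := by
      intro l _
      rw [if_neg (fun hc => h (add_single_eq_single.mp hc).1), mul_zero]
    rw [Finset.sum_congr rfl this, Finset.sum_const_zero, mul_zero, mul_zero]

lemma gC_pd {Γ : Christoffel d} (hΓ : SmoothChristoffel Γ) (x : E d) (i j k : Fin d)
    (γ : MIdx d) :
    pd d i (fun z => gC Γ z j k γ) x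
      = ∑ l, pd d i (fun z => Γ z k j l) x * (if γ = Finsupp.single l 1 then 1 else 0) := by
  unfold gC
  rw [pd_sum (f := fun l z => Γ z k j l * (if γ = Finsupp.single l 1 then (1:ℝ) else 0))
    (fun l _ => ((hΓ k j l).differentiable (by simp)).differentiableAt.mul_const _)]
  apply Finset.sum_congr rfl; intro l _
  exact pd_mul_const _ ((hΓ k j l).differentiable (by simp)).differentiableAt

lemma ite_push (γ : MIdx d) (p : Fin d → ℝ) :
    ∑ l, p l * (if γ = Finsupp.single l 1 then (1:ℝ) else 0)
      = ∑ l, (if γ = Finsupp.single l 1 then p l else 0) := by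
  apply Finset.sum_congr rfl; intro l _
  by_cases h : γ = Finsupp.single l 1 <;> simp [h]

lemma sum_mul_ite (γ : MIdx d) (b : Fin d → ℝ) (c : Fin d → Fin d → ℝ) :
    ∑ m, b m * (∑ l, c m l * (if γ = Finsupp.single l 1 then (1:ℝ) else 0))
      = ∑ l, (if γ = Finsupp.single l 1 then (∑ m, b m * c m l) else 0) := by
  rw [Finset.sum_congr rfl (fun m (_ : m ∈ Finset.univ) => Finset.mul_sum
    Finset.univ (fun l => c m l * (if γ = Finsupp.single l 1 then (1:ℝ) else 0)) (b m))]
  rw [Finset.sum_comm]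
  apply Finset.sum_congr rfl; intro l _
  by_cases h : γ = Finsupp.single l 1
  · simp only [if_pos h]
    apply Finset.sum_congr rfl; intro m _
    ring
  · simp only [if_neg h]
    apply Finset.sum_eq_zero; intro m _
    ring

/-! ### the six structural identities -/

lemma L_dd (s : SCoeff d) (x : E d) (i j : Fin d) (β : MIdx d) :
    ((β i : ℝ) + 1) * deltaS s x j (β + Finsupp.single i 1)
      - ((β j : ℝ) + 1) * deltaS s x i (β + Finsupp.single j 1) = 0 := by
  unfold deltaS
  rw [add_right_comm β (Finsupp.single j 1) (Finsupp.single i 1)]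
  rcases eq_or_ne i j with rfl | hne
  · exact sub_self _
  · have h1 : (((β + Finsupp.single i 1 : MIdx d) j : ℕ) : ℝ) = (β j : ℝ) := by
      rw [app_add_single, if_neg hne]
      push_cast; ring
    have h2 : (((β + Finsupp.single j 1 : MIdx d) i : ℕ) : ℝ) = (β i : ℝ) := by
      rw [app_add_single, if_neg (Ne.symm hne)]
      push_cast; ring
    rw [h1, h2]
    ring

lemma L_K2 {Γ : Christoffel d} {s : SCoeff d}
    (hs : ∀ γ, ContDiff ℝ (⊤ : ℕ∞) (fun z => s z γ)) (x : E d) (i j : Fin d) (β : MIdx d) :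
    ((β i : ℝ) + 1) * nablaPrimeS Γ s x j (β + Finsupp.single i 1)
      = nablaPrimeS Γ (fun z γ => deltaS s z i γ) x j β
        - ∑ m, Γ x m j i * (((β m : ℝ) + 1) * s x (β + Finsupp.single m 1)) := by
  rw [nablaPrimeS_eq, nablaPrimeS_eq]
  have e1 : pd d j (fun z => deltaS s z i β) x
      = ((β i : ℝ) + 1) * pd d j (fun z => s z (β + Finsupp.single i 1)) x := by
    unfold deltaS
    exact pd_const_mul _ ((hs _).differentiable (by simp)).differentiableAt
  have hB : ((β i : ℝ) + 1) * Vact (gC Γ x j) (s x) (β + Finsupp.single i 1)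
      = Vact (Pc (Ec i) (gC Γ x j)) (s x) β + Qd (Ec i) (gC Γ x j) (s x) β :=
    (Vact_E i (fun γ => Vact (gC Γ x j) (s x) γ) β).symm.trans
      (Vact_comp (Ec i) (gC Γ x j) (s x) β)
  have hC : Vact (gC Γ x j) (fun γ => deltaS s x i γ) β
      = Vact (Pc (gC Γ x j) (Ec i)) (s x) β + Qd (gC Γ x j) (Ec i) (s x) β := by
    have : (fun γ => deltaS s x i γ) = fun γ => Vact (Ec i) (s x) γ :=
      funext fun γ => deltaS_eq s x i γ
    rw [this]
    exact Vact_comp (gC Γ x j) (Ec i) (s x) β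
  have hD : Vact (Pc (gC Γ x j) (Ec i)) (s x) β = 0 := by
    rw [Vact_congrV (fun k γ => Pc_E_right i (gC Γ x j) k γ) (s x) β]
    exact Vact_zeroV (s x) β
  have hE : Qd (Ec i) (gC Γ x j) (s x) β = Qd (gC Γ x j) (Ec i) (s x) β :=
    Qd_symm _ _ _ _
  have hF : Vact (Pc (Ec i) (gC Γ x j)) (s x) β
      = ∑ m, Γ x m j i * (((β m : ℝ) + 1) * s x (β + Finsupp.single m 1)) := by
    rw [Vact_congrV (fun k γ => Pc_E_gC Γ x i j k γ) (s x) β]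
    exact Vact_zero_supp (fun k => Γ x k j i) (s x) β
  linear_combination (-1) * e1 + (-1) * hB + hC + hD + (-1) * hE + (-1) * hF

lemma L_R {Γ : Christoffel d} (hΓ : SmoothChristoffel Γ) {s : SCoeff d}
    (hs : ∀ γ, ContDiff ℝ (⊤ : ℕ∞) (fun z => s z γ)) (x : E d) (i j : Fin d) (β : MIdx d) :
    nablaPrimeS Γ (fun z γ => nablaPrimeS Γ s z j γ) x i β
      - nablaPrimeS Γ (fun z γ => nablaPrimeS Γ s z i γ) x j β
      = Vact (fun k γ => RForm Γ x i j k γ) (s x) β := by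
  have hdpd : ∀ (r : Fin d) (γ : MIdx d), DifferentiableAt ℝ
      (fun z => pd d r (fun w => s w γ) z) x :=
    fun r γ => ((contDiff_pd (hs γ)).differentiable (by simp)).differentiableAt
  have hdgC : ∀ (r : Fin d), ∀ k γ, DifferentiableAt ℝ (fun z => gC Γ z r k γ) x :=
    fun r k γ => ((contDiff_gC hΓ r k γ).differentiable (by simp)).differentiableAt
  have hds : ∀ γ, DifferentiableAt ℝ (fun z => s z γ) x :=
    fun γ => ((hs γ).differentiable (by simp)).differentiableAt
  have hdV : ∀ (r : Fin d) (γ : MIdx d), DifferentiableAt ℝ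
      (fun z => Vact (gC Γ z r) (s z) γ) x :=
    fun r γ => ((contDiff_Vact γ (contDiff_gC hΓ r) hs).differentiable (by simp)).differentiableAt
  -- expand the double nablaPrimeS in directions (i, j)
  have expand : ∀ r r' : Fin d,
      nablaPrimeS Γ (fun z γ => nablaPrimeS Γ s z r' γ) x r β
        = pd d r (pd d r' (fun w => s w β)) x
          - Vact (fun k γ => pd d r (fun z => gC Γ z r' k γ) x) (s x) β
          - Vact (gC Γ x r') (fun γ => pd d r (fun z => s z γ) x) β
          - Vact (gC Γ x r) (fun γ => pd d r' (fun z => s z γ) x) β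
          + (Vact (Pc (gC Γ x r) (gC Γ x r')) (s x) β + Qd (gC Γ x r) (gC Γ x r') (s x) β) := by
    intro r r'
    rw [nablaPrimeS_eq]
    have e1 : pd d r (fun z => nablaPrimeS Γ s z r' β) x
        = pd d r (fun z => pd d r' (fun w => s w β) z - Vact (gC Γ z r') (s z) β) x :=
      pd_congr (fun z => nablaPrimeS_eq Γ s z r' β) x
    rw [e1, pd_sub (hdpd r' β) (hdV r' β)]
    rw [pd_Vact β (hdgC r') hds]
    have e2 : Vact (gC Γ x r) (fun γ => nablaPrimeS Γ s x r' γ) β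
        = Vact (gC Γ x r) (fun γ => pd d r' (fun z => s z γ) x) β
          - (Vact (Pc (gC Γ x r) (gC Γ x r')) (s x) β + Qd (gC Γ x r) (gC Γ x r') (s x) β) := by
      have : (fun γ => nablaPrimeS Γ s x r' γ)
          = fun γ => pd d r' (fun z => s z γ) x - Vact (gC Γ x r') (s x) γ :=
        funext fun γ => nablaPrimeS_eq Γ s x r' γ
      rw [this, Vact_sub, Vact_comp]
    rw [e2]
    ring
  rw [expand i j, expand j i]
  have hcomm : pd d i (pd d j (fun w => s w β)) x = pd d j (pd d i (fun w => s w β)) x :=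
    pd_comm (hs β) x
  have hQ : Qd (gC Γ x i) (gC Γ x j) (s x) β = Qd (gC Γ x j) (gC Γ x i) (s x) β :=
    Qd_symm _ _ _ _
  -- pointwise identification of the curvature coefficients
  have hRF : ∀ k γ, RForm Γ x i j k γ
      = (pd d j (fun z => gC Γ z i k γ) x - pd d i (fun z => gC Γ z j k γ) x)
        + (Pc (gC Γ x i) (gC Γ x j) k γ - Pc (gC Γ x j) (gC Γ x i) k γ) := by
    intro k γ
    rw [gC_pd hΓ x j i k γ, gC_pd hΓ x i j k γ,
      Pc_gC_right Γ x j (gC Γ x i) k γ, Pc_gC_right Γ x i (gC Γ x j) k γ]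
    unfold RForm gC
    rw [ite_push γ (fun l => curv Γ x k i j l),
      ite_push γ (fun l => pd d j (fun z => Γ z k i l) x),
      ite_push γ (fun l => pd d i (fun z => Γ z k j l) x),
      sum_mul_ite γ (fun m => Γ x k j m) (fun m l => Γ x m i l),
      sum_mul_ite γ (fun m => Γ x k i m) (fun m l => Γ x m j l)]
    rw [← Finset.sum_neg_distrib, ← Finset.sum_sub_distrib, ← Finset.sum_sub_distrib,
      ← Finset.sum_add_distrib]
    apply Finset.sum_congr rfl; intro l _
    by_cases h : γ = Finsupp.single l 1
    · rw [if_pos h, if_pos h, if_pos h, if_pos h, if_pos h]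
      unfold curv
      rw [Finset.sum_sub_distrib]
      ring
    · rw [if_neg h, if_neg h, if_neg h, if_neg h, if_neg h]
      ring
  have hV : Vact (fun k γ => RForm Γ x i j k γ) (s x) β
      = Vact (fun k γ => (pd d j (fun z => gC Γ z i k γ) x - pd d i (fun z => gC Γ z j k γ) x)
          + (Pc (gC Γ x i) (gC Γ x j) k γ - Pc (gC Γ x j) (gC Γ x i) k γ)) (s x) β :=
    Vact_congrV hRF (s x) β
  rw [hV, Vact_addV (fun k γ => pd d j (fun z => gC Γ z i k γ) x
      - pd d i (fun z => gC Γ z j k γ) x)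
    (fun k γ => Pc (gC Γ x i) (gC Γ x j) k γ - Pc (gC Γ x j) (gC Γ x i) k γ) (s x) β,
    Vact_subV (fun k γ => pd d j (fun z => gC Γ z i k γ) x)
      (fun k γ => pd d i (fun z => gC Γ z j k γ) x) (s x) β,
    Vact_subV (fun k γ => Pc (gC Γ x i) (gC Γ x j) k γ)
      (fun k γ => Pc (gC Γ x j) (gC Γ x i) k γ) (s x) β]
  have eφ1 : Vact (fun k γ => Pc (gC Γ x i) (gC Γ x j) k γ) (s x) β
      = Vact (Pc (gC Γ x i) (gC Γ x j)) (s x) β := rfl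
  have eφ2 : Vact (fun k γ => Pc (gC Γ x j) (gC Γ x i) k γ) (s x) β
      = Vact (Pc (gC Γ x j) (gC Γ x i)) (s x) β := rfl
  rw [eφ1, eφ2]
  linear_combination hcomm + hQ

lemma L_dA (a : ACoeff d) (s : SCoeff d) (x : E d) (i j : Fin d) (β : MIdx d) :
    ((β i : ℝ) + 1) * ASect a s x j (β + Finsupp.single i 1)
      = Vact (fun k γ => ((γ i : ℝ) + 1) * a x j k (γ + Finsupp.single i 1)) (s x) β
        + ASect a (fun z γ => deltaS s z i γ) x j β := by
  rw [ASect_eq, ASect_eq]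
  have h1 : ((β i : ℝ) + 1) * Vact (aV a x j) (s x) (β + Finsupp.single i 1)
      = Vact (Pc (Ec i) (aV a x j)) (s x) β + Qd (Ec i) (aV a x j) (s x) β :=
    (Vact_E i (fun γ => Vact (aV a x j) (s x) γ) β).symm.trans
      (Vact_comp (Ec i) (aV a x j) (s x) β)
  have h2 : Vact (aV a x j) (fun γ => deltaS s x i γ) β
      = Vact (Pc (aV a x j) (Ec i)) (s x) β + Qd (aV a x j) (Ec i) (s x) β := by
    have : (fun γ => deltaS s x i γ) = fun γ => Vact (Ec i) (s x) γ :=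
      funext fun γ => deltaS_eq s x i γ
    rw [this]
    exact Vact_comp (aV a x j) (Ec i) (s x) β
  have h3 : Vact (Pc (aV a x j) (Ec i)) (s x) β = 0 := by
    rw [Vact_congrV (fun k γ => Pc_E_right i (aV a x j) k γ) (s x) β]
    exact Vact_zeroV (s x) β
  have h4 : Qd (Ec i) (aV a x j) (s x) β = Qd (aV a x j) (Ec i) (s x) β := Qd_symm _ _ _ _
  have h5 : Vact (fun k γ => ((γ i : ℝ) + 1) * a x j k (γ + Finsupp.single i 1)) (s x) β
      = Vact (Pc (Ec i) (aV a x j)) (s x) β :=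
    (Vact_congrV (fun k γ => Pc_E i (aV a x j) k γ) (s x) β).symm
  linear_combination h1 - h2 - h3 + h4 - h5

lemma L_br (a : ACoeff d) (s : SCoeff d) (x : E d) (i j : Fin d) (β : MIdx d) :
    ASect a (fun z γ => ASect a s z j γ) x i β - ASect a (fun z γ => ASect a s z i γ) x j β
      = Vact (fun k γ => brA a x i j k γ) (s x) β := by
  have expand : ∀ r r' : Fin d, ASect a (fun z γ => ASect a s z r' γ) x r β
      = Vact (Pc (aV a x r) (aV a x r')) (s x) β + Qd (aV a x r) (aV a x r') (s x) β := by
    intro r r'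
    rw [ASect_eq]
    have : (fun γ => (fun z γ' => ASect a s z r' γ') x γ) = fun γ => Vact (aV a x r') (s x) γ :=
      funext fun γ => ASect_eq a s x r' γ
    rw [this]
    exact Vact_comp (aV a x r) (aV a x r') (s x) β
  rw [expand i j, expand j i]
  have hQ : Qd (aV a x i) (aV a x j) (s x) β = Qd (aV a x j) (aV a x i) (s x) β := Qd_symm _ _ _ _
  have hbr : ∀ k γ, brA a x i j k γ
      = Pc (aV a x i) (aV a x j) k γ - Pc (aV a x j) (aV a x i) k γ := by
    intro k γ
    unfold brA Pc aV
    rw [← Finset.sum_sub_distrib, Finset.sum_comm]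
    apply Finset.sum_congr rfl
    intro uv _
    rw [← Finset.sum_sub_distrib]
  have hV : Vact (fun k γ => brA a x i j k γ) (s x) β
      = Vact (Pc (aV a x i) (aV a x j)) (s x) β
        - Vact (Pc (aV a x j) (aV a x i)) (s x) β := by
    rw [Vact_congrV hbr (s x) β, Vact_subV]
  linear_combination hQ - hV

lemma L_nA {Γ : Christoffel d} (hΓ : SmoothChristoffel Γ) {a : ACoeff d} (ha : SmoothACoeff a)
    {s : SCoeff d} (hs : ∀ γ, ContDiff ℝ (⊤ : ℕ∞) (fun z => s z γ)) (x : E d) (i j : Fin d)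
    (β : MIdx d) :
    nablaPrimeS Γ (fun z γ => ASect a s z j γ) x i β
      = Vact (fun k γ => nablaPrimeA Γ a x i j k γ) (s x) β
        + ASect a (fun z γ => nablaPrimeS Γ s z i γ) x j β := by
  have hda : ∀ k γ, DifferentiableAt ℝ (fun z => aV a z j k γ) x :=
    fun k γ => ((ha j k γ).differentiable (by simp)).differentiableAt
  have hds : ∀ γ, DifferentiableAt ℝ (fun z => s z γ) x :=
    fun γ => ((hs γ).differentiable (by simp)).differentiableAt
  have e1 : nablaPrimeS Γ (fun z γ => ASect a s z j γ) x i β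
      = pd d i (fun z => Vact (aV a z j) (s z) β) x
        - Vact (gC Γ x i) (fun γ => Vact (aV a x j) (s x) γ) β := by
    rw [nablaPrimeS_eq]
    congr 1
    · exact pd_congr (fun z => ASect_eq a s z j β) x
    · congr 1
      exact funext fun γ => ASect_eq a s x j γ
  rw [e1, pd_Vact β hda hds, Vact_comp]
  have e2 : ASect a (fun z γ => nablaPrimeS Γ s z i γ) x j β
      = Vact (aV a x j) (fun γ => pd d i (fun z => s z γ) x) β
        - (Vact (Pc (aV a x j) (gC Γ x i)) (s x) β + Qd (aV a x j) (gC Γ x i) (s x) β) := by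
    rw [ASect_eq]
    have : (fun γ => (fun z γ' => nablaPrimeS Γ s z i γ') x γ)
        = fun γ => pd d i (fun z => s z γ) x - Vact (gC Γ x i) (s x) γ :=
      funext fun γ => nablaPrimeS_eq Γ s x i γ
    rw [this, Vact_sub, Vact_comp]
  rw [e2]
  have e3 : Vact (fun k γ => nablaPrimeA Γ a x i j k γ) (s x) β
      = Vact (fun k γ => pd d i (fun z => aV a z j k γ) x) (s x) β
        - Vact (Pc (gC Γ x i) (aV a x j)) (s x) β
        + Vact (Pc (aV a x j) (gC Γ x i)) (s x) β := by
    have hpt : ∀ k γ, nablaPrimeA Γ a x i j k γ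
        = (pd d i (fun z => aV a z j k γ) x - Pc (gC Γ x i) (aV a x j) k γ)
          + Pc (aV a x j) (gC Γ x i) k γ := by
      intro k γ
      have := nablaPrimeA_eq Γ a x i j k γ
      rw [this]
      rfl
    rw [Vact_congrV hpt (s x) β, Vact_addV, Vact_subV]
  have hQ : Qd (gC Γ x i) (aV a x j) (s x) β = Qd (aV a x j) (gC Γ x i) (s x) β := Qd_symm _ _ _ _
  linear_combination -e3 - hQ

/-! ### linearity in the section and the key identity -/

lemma ASect_sub (a : ACoeff d) (t u : SCoeff d) (x : E d) (i : Fin d) (β : MIdx d) :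
    ASect a (fun z γ => t z γ - u z γ) x i β = ASect a t x i β - ASect a u x i β := by
  rw [ASect_eq, ASect_eq, ASect_eq]
  exact Vact_sub _ _ _ _

lemma nablaPrimeS_sub {Γ : Christoffel d} {t u : SCoeff d} {x : E d}
    (ht : ∀ γ, DifferentiableAt ℝ (fun z => t z γ) x)
    (hu : ∀ γ, DifferentiableAt ℝ (fun z => u z γ) x) (i : Fin d) (β : MIdx d) :
    nablaPrimeS Γ (fun z γ => t z γ - u z γ) x i β
      = nablaPrimeS Γ t x i β - nablaPrimeS Γ u x i β := by
  rw [nablaPrimeS_eq, nablaPrimeS_eq, nablaPrimeS_eq]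
  rw [pd_sub (ht β) (hu β), Vact_sub]
  ring

lemma key {Γ : Christoffel d} (hΓ : SmoothChristoffel Γ) (hT : Torsionfree Γ)
    {a : ACoeff d} (ha : SmoothACoeff a) (hF : FlatEq Γ a) {s : SCoeff d}
    (hs : ∀ γ, ContDiff ℝ (⊤ : ℕ∞) (fun z => s z γ)) (x : E d) (i j : Fin d) (β : MIdx d) :
    ((β i : ℝ) + 1) * (deltaS s x j (β + Finsupp.single i 1)
        - nablaPrimeS Γ s x j (β + Finsupp.single i 1)
        - ASect a s x j (β + Finsupp.single i 1))
      - ((β j : ℝ) + 1) * (deltaS s x i (β + Finsupp.single j 1)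
          - nablaPrimeS Γ s x i (β + Finsupp.single j 1)
          - ASect a s x i (β + Finsupp.single j 1))
      = (nablaPrimeS Γ (fun z γ => deltaS s z j γ - nablaPrimeS Γ s z j γ - ASect a s z j γ) x i β
          - nablaPrimeS Γ (fun z γ => deltaS s z i γ - nablaPrimeS Γ s z i γ - ASect a s z i γ) x j β)
        + (ASect a (fun z γ => deltaS s z j γ - nablaPrimeS Γ s z j γ - ASect a s z j γ) x i β
            - ASect a (fun z γ => deltaS s z i γ - nablaPrimeS Γ s z i γ - ASect a s z i γ) x j β) := by
  have hdel : ∀ (r : Fin d) (γ : MIdx d), DifferentiableAt ℝ (fun z => deltaS s z r γ) x :=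
    fun r γ => ((contDiff_deltaS hs r γ).differentiable (by simp)).differentiableAt
  have hnab : ∀ (r : Fin d) (γ : MIdx d), DifferentiableAt ℝ (fun z => nablaPrimeS Γ s z r γ) x :=
    fun r γ => ((contDiff_nablaPrimeS hΓ hs r γ).differentiable (by simp)).differentiableAt
  have hA : ∀ (r : Fin d) (γ : MIdx d), DifferentiableAt ℝ (fun z => ASect a s z r γ) x :=
    fun r γ => ((contDiff_ASect ha hs r γ).differentiable (by simp)).differentiableAt
  have hdn : ∀ (r : Fin d) (γ : MIdx d), DifferentiableAt ℝ
      (fun z => deltaS s z r γ - nablaPrimeS Γ s z r γ) x :=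
    fun r γ => (hdel r γ).sub (hnab r γ)
  rw [nablaPrimeS_sub (hdn j) (hA j) i β, nablaPrimeS_sub (hdel j) (hnab j) i β,
    nablaPrimeS_sub (hdn i) (hA i) j β, nablaPrimeS_sub (hdel i) (hnab i) j β,
    ASect_sub a (fun z γ => deltaS s z j γ - nablaPrimeS Γ s z j γ)
      (fun z γ => ASect a s z j γ) x i β,
    ASect_sub a (fun z γ => deltaS s z j γ) (fun z γ => nablaPrimeS Γ s z j γ) x i β,
    ASect_sub a (fun z γ => deltaS s z i γ - nablaPrimeS Γ s z i γ)
      (fun z γ => ASect a s z i γ) x j β,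
    ASect_sub a (fun z γ => deltaS s z i γ) (fun z γ => nablaPrimeS Γ s z i γ) x j β]
  have hdd := L_dd s x i j β
  have hK2ij := L_K2 (Γ := Γ) hs x i j β
  have hK2ji := L_K2 (Γ := Γ) hs x j i β
  have htors : ∑ m, Γ x m j i * (((β m : ℝ) + 1) * s x (β + Finsupp.single m 1))
      = ∑ m, Γ x m i j * (((β m : ℝ) + 1) * s x (β + Finsupp.single m 1)) :=
    Finset.sum_congr rfl (fun m _ => by rw [hT x m j i])
  have hR := L_R hΓ hs x i j β
  have hdAij := L_dA a s x i j β
  have hdAji := L_dA a s x j i β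
  have hnAij := L_nA hΓ ha hs x i j β
  have hnAji := L_nA hΓ ha hs x j i β
  have hbr := L_br a s x i j β
  have hFl : Vact (fun k γ => deltaA a x i j k γ) (s x) β
      = Vact (fun k γ => RForm Γ x i j k γ) (s x) β
        + (Vact (fun k γ => nablaPrimeA Γ a x i j k γ) (s x) β
            - Vact (fun k γ => nablaPrimeA Γ a x j i k γ) (s x) β)
        + Vact (fun k γ => brA a x i j k γ) (s x) β := by
    rw [Vact_congrV (fun k γ => hF x i j k γ) (s x) β, Vact_addV, Vact_addV, Vact_subV]
  have hdAs : Vact (fun k γ => deltaA a x i j k γ) (s x) β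
      = Vact (fun k γ => ((γ i : ℝ) + 1) * a x j k (γ + Finsupp.single i 1)) (s x) β
        - Vact (fun k γ => ((γ j : ℝ) + 1) * a x i k (γ + Finsupp.single j 1)) (s x) β := by
    have : ∀ k γ, deltaA a x i j k γ
        = ((γ i : ℝ) + 1) * a x j k (γ + Finsupp.single i 1)
          - ((γ j : ℝ) + 1) * a x i k (γ + Finsupp.single j 1) := fun k γ => rfl
    rw [Vact_congrV this (s x) β, Vact_subV]
  linear_combination hdd - hK2ij + hK2ji + htors + hR - hdAij + hdAji + hnAij - hnAji
    + hbr - hFl + hdAs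

/-! ### the homotopy identity and vanishing lemmas -/

lemma sub_add_single_comm {α : MIdx d} {i j : Fin d} (h : 0 < α j) :
    α - Finsupp.single j 1 + Finsupp.single i 1
      = α + Finsupp.single i 1 - Finsupp.single j 1 := by
  ext a
  rw [Finsupp.add_apply, Finsupp.tsub_apply, Finsupp.tsub_apply, Finsupp.add_apply,
    Finsupp.single_apply, Finsupp.single_apply]
  by_cases hj : j = a
  · subst hj
    split_ifs <;> omega
  · split_ifs <;> omega

lemma coe_sub_single_self {α : MIdx d} {j : Fin d} (h : 0 < α j) :
    (((α - Finsupp.single j 1 : MIdx d) j : ℝ)) + 1 = (α j : ℝ) := by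
  have h1 : (α - Finsupp.single j 1 : MIdx d) j + 1 = α j := by
    rw [Finsupp.tsub_apply, Finsupp.single_apply, if_pos rfl]
    omega
  exact_mod_cast h1

lemma sub_single_apply_ne {α : MIdx d} {j i : Fin d} (hne : j ≠ i) :
    ((α - Finsupp.single j 1 : MIdx d) i) = α i := by
  rw [Finsupp.tsub_apply, Finsupp.single_apply, if_neg hne]
  omega

lemma comb (c' : Fin d → MIdx d → ℝ) (α : MIdx d) (i : Fin d) :
    ((mdeg α : ℝ) + 1) * c' i α
      = (∑ j, if 0 < α j then
            (((α - Finsupp.single j 1 : MIdx d) j : ℝ) + 1)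
              * c' i (α - Finsupp.single j 1 + Finsupp.single j 1)
            - (((α - Finsupp.single j 1 : MIdx d) i : ℝ) + 1)
              * c' j (α - Finsupp.single j 1 + Finsupp.single i 1)
          else 0)
        + ((α i : ℝ) + 1) * (∑ j, if 0 < (α + Finsupp.single i 1 : MIdx d) j then
            c' j (α + Finsupp.single i 1 - Finsupp.single j 1) else 0) := by
  have h_split : (∑ j, if 0 < α j then
        (((α - Finsupp.single j 1 : MIdx d) j : ℝ) + 1)
          * c' i (α - Finsupp.single j 1 + Finsupp.single j 1)
        - (((α - Finsupp.single j 1 : MIdx d) i : ℝ) + 1)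
          * c' j (α - Finsupp.single j 1 + Finsupp.single i 1)
      else 0)
      = (∑ j, if 0 < α j then (((α - Finsupp.single j 1 : MIdx d) j : ℝ) + 1)
            * c' i (α - Finsupp.single j 1 + Finsupp.single j 1) else 0)
        - (∑ j, if 0 < α j then (((α - Finsupp.single j 1 : MIdx d) i : ℝ) + 1)
            * c' j (α - Finsupp.single j 1 + Finsupp.single i 1) else 0) := by
    rw [← Finset.sum_sub_distrib]
    apply Finset.sum_congr rfl; intro j _
    by_cases h : 0 < α j <;> simp [h]
  have hP1 : (∑ j, if 0 < α j then (((α - Finsupp.single j 1 : MIdx d) j : ℝ) + 1)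
        * c' i (α - Finsupp.single j 1 + Finsupp.single j 1) else 0)
      = (mdeg α : ℝ) * c' i α := by
    have step : ∀ j ∈ (Finset.univ : Finset (Fin d)),
        (if 0 < α j then (((α - Finsupp.single j 1 : MIdx d) j : ℝ) + 1)
          * c' i (α - Finsupp.single j 1 + Finsupp.single j 1) else 0)
        = (α j : ℝ) * c' i α := by
      intro j _
      by_cases h : 0 < α j
      · rw [if_pos h, coe_sub_single_self h, sub_single_add h]
      · rw [if_neg h]
        have : α j = 0 := by omega
        rw [this]
        simp
    rw [Finset.sum_congr rfl step, ← Finset.sum_mul]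
    congr 1
    rw [mdeg_eq_sum]
    push_cast
    rfl
  have hP2 : (∑ j, if 0 < α j then (((α - Finsupp.single j 1 : MIdx d) i : ℝ) + 1)
        * c' j (α - Finsupp.single j 1 + Finsupp.single i 1) else 0)
      - ((α i : ℝ) + 1) * (∑ j, if 0 < (α + Finsupp.single i 1 : MIdx d) j then
          c' j (α + Finsupp.single i 1 - Finsupp.single j 1) else 0)
      = -(c' i α) := by
    rw [Finset.mul_sum, ← Finset.sum_sub_distrib]
    rw [Finset.sum_eq_single_of_mem i (Finset.mem_univ i)]
    · have hg : 0 < (α + Finsupp.single i 1 : MIdx d) i := by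
        rw [app_add_single, if_pos rfl]
        omega
      rw [if_pos hg, add_tsub_cancel_right]
      by_cases h : 0 < α i
      · rw [if_pos h, coe_sub_single_self h, sub_single_add h]
        ring
      · rw [if_neg h]
        have h0 : (α i : ℝ) = 0 := by
          have : α i = 0 := by omega
          rw [this]; exact Nat.cast_zero
        rw [h0]
        ring
    · intro b _ hb
      have happ : (α + Finsupp.single i 1 : MIdx d) b = α b := by
        rw [app_add_single, if_neg (fun hc => hb hc.symm)]
        omega
      by_cases h : 0 < α b
      · have hg : 0 < (α + Finsupp.single i 1 : MIdx d) b := by rw [happ]; exact h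
        rw [if_pos h, if_pos hg]
        have h1 : (((α - Finsupp.single b 1 : MIdx d) i : ℝ)) = (α i : ℝ) := by
          rw [sub_single_apply_ne hb]
        rw [h1, sub_add_single_comm h]
        ring
      · have hg : ¬ 0 < (α + Finsupp.single i 1 : MIdx d) b := by rw [happ]; exact h
        rw [if_neg h, if_neg hg]
        ring
  linear_combination -h_split - hP1 + hP2

lemma nablaPrimeS_vanish {Γ : Christoffel d} {t : SCoeff d} {β : MIdx d}
    (h : ∀ z γ, mdeg γ = mdeg β → t z γ = 0) (x : E d) (i : Fin d) :
    nablaPrimeS Γ t x i β = 0 := by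
  unfold nablaPrimeS
  have h1 : (fun z => t z β) = fun _ => (0:ℝ) := funext fun z => h z β rfl
  rw [h1, pd_zero]
  rw [Finset.sum_eq_zero, sub_zero]
  intro m _
  apply Finset.sum_eq_zero; intro l _
  by_cases hl : 0 < β l
  · rw [if_pos hl]
    have hm : mdeg (β - Finsupp.single l 1 + Finsupp.single m 1) = mdeg β := by
      rw [mdeg_add, mdeg_single]
      have := mdeg_sub_single hl
      omega
    rw [h x _ hm, mul_zero]
  · rw [if_neg hl]

lemma ASect_vanish {a : ACoeff d} (ha2 : ∀ x i k β, mdeg β ≤ 1 → a x i k β = 0)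
    {t : SCoeff d} {β : MIdx d} (h : ∀ z γ, mdeg γ < mdeg β → t z γ = 0)
    (x : E d) (i : Fin d) : ASect a t x i β = 0 := by
  unfold ASect
  apply Finset.sum_eq_zero; intro k _
  apply Finset.sum_eq_zero; intro uv hm
  rw [Finset.HasAntidiagonal.mem_antidiagonal] at hm
  by_cases hu : mdeg uv.1 ≤ 1
  · rw [ha2 x i k uv.1 hu, zero_mul, zero_mul]
  · have hdeg : mdeg (uv.2 + Finsupp.single k 1) < mdeg β := by
      have hadd : mdeg uv.1 + mdeg uv.2 = mdeg β := by rw [← mdeg_add, hm]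
      rw [mdeg_add, mdeg_single]
      omega
    rw [h x _ hdeg, mul_zero]

/-! ### δ⁻¹ computations -/

lemma deltaInvS_zero (ω : E d → Fin d → MIdx d → ℝ) (x : E d) :
    deltaInvS ω x 0 = 0 := by
  unfold deltaInvS
  rw [Finset.sum_eq_zero, mul_zero]
  intro i _
  rw [if_neg]
  simp

lemma sum_ite_coe (α : MIdx d) :
    (∑ i, if 0 < α i then ((α i : ℕ) : ℝ) else 0) = ((mdeg α : ℕ) : ℝ) := by
  rw [mdeg_eq_sum]
  push_cast
  apply Finset.sum_congr rfl; intro j _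
  by_cases h : 0 < α j
  · rw [if_pos h]
  · rw [if_neg h]
    have : α j = 0 := by omega
    rw [this]; exact Nat.cast_zero.symm

lemma deltaInv_deltaS (s : SCoeff d) (x : E d) (α : MIdx d) :
    deltaInvS (fun z i β => deltaS s z i β) x α
      = s x α - (if α = 0 then s x 0 else 0) := by
  by_cases h : α = 0
  · subst h
    rw [deltaInvS_zero, if_pos rfl, sub_self]
  · rw [if_neg h]
    unfold deltaInvS deltaS
    have hm : mdeg α ≠ 0 := fun hc => h (mdeg_eq_zero.mp hc)
    have step : ∀ i ∈ (Finset.univ : Finset (Fin d)),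
        (if 0 < α i then (((α - Finsupp.single i 1 : MIdx d) i : ℝ) + 1)
          * s x (α - Finsupp.single i 1 + Finsupp.single i 1) else 0)
        = (if 0 < α i then ((α i : ℕ) : ℝ) else 0) * s x α := by
      intro i _
      by_cases hi : 0 < α i
      · rw [if_pos hi, if_pos hi, coe_sub_single_self hi, sub_single_add hi]
      · rw [if_neg hi, if_neg hi, zero_mul]
    rw [Finset.sum_congr rfl step, ← Finset.sum_mul, sum_ite_coe α]
    have hm' : ((mdeg α : ℕ) : ℝ) ≠ 0 := Nat.cast_ne_zero.mpr hm
    rw [sub_zero, ← mul_assoc, one_div, inv_mul_cancel₀ hm', one_mul]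

/-! ### congruence lemmas for the recursion -/

lemma nablaPrimeS_congr {Γ : Christoffel d} {s s' : SCoeff d} {β : MIdx d}
    (h : ∀ z γ, mdeg γ = mdeg β → s z γ = s' z γ) (x : E d) (i : Fin d) :
    nablaPrimeS Γ s x i β = nablaPrimeS Γ s' x i β := by
  unfold nablaPrimeS
  congr 1
  · exact pd_congr (fun z => h z β rfl) x
  · apply Finset.sum_congr rfl; intro m _
    apply Finset.sum_congr rfl; intro l _
    by_cases hl : 0 < β l
    · rw [if_pos hl, if_pos hl]
      have hm : mdeg (β - Finsupp.single l 1 + Finsupp.single m 1) = mdeg β := by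
        rw [mdeg_add, mdeg_single]
        have := mdeg_sub_single hl
        omega
      rw [h x _ hm]
    · rw [if_neg hl, if_neg hl]

lemma ASect_congr {a : ACoeff d} (ha2 : ∀ x i k β, mdeg β ≤ 1 → a x i k β = 0)
    {s s' : SCoeff d} {β : MIdx d} (h : ∀ z γ, mdeg γ < mdeg β → s z γ = s' z γ)
    (x : E d) (i : Fin d) : ASect a s x i β = ASect a s' x i β := by
  unfold ASect
  apply Finset.sum_congr rfl; intro k _
  apply Finset.sum_congr rfl; intro uv hm
  rw [Finset.HasAntidiagonal.mem_antidiagonal] at hm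
  by_cases hu : mdeg uv.1 ≤ 1
  · rw [ha2 x i k uv.1 hu]
    simp
  · have hdeg : mdeg (uv.2 + Finsupp.single k 1) < mdeg β := by
      have hadd : mdeg uv.1 + mdeg uv.2 = mdeg β := by rw [← mdeg_add, hm]
      rw [mdeg_add, mdeg_single]
      omega
    rw [h x _ hdeg]

lemma deltaInvS_congr {Γ : Christoffel d} {a : ACoeff d}
    (ha2 : ∀ x i k β, mdeg β ≤ 1 → a x i k β = 0) {s s' : SCoeff d} {α : MIdx d}
    (h : ∀ β, mdeg β < mdeg α → ∀ z, s z β = s' z β) (x : E d) :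
    deltaInvS (fun z i β => nablaPrimeS Γ s z i β + ASect a s z i β) x α
      = deltaInvS (fun z i β => nablaPrimeS Γ s' z i β + ASect a s' z i β) x α := by
  unfold deltaInvS
  congr 1
  apply Finset.sum_congr rfl; intro i _
  by_cases hi : 0 < α i
  · rw [if_pos hi, if_pos hi]
    have hβ : mdeg (α - Finsupp.single i 1) < mdeg α := by
      have := mdeg_sub_single hi
      omega
    show nablaPrimeS Γ s x i (α - Finsupp.single i 1) + ASect a s x i (α - Finsupp.single i 1)
        = nablaPrimeS Γ s' x i (α - Finsupp.single i 1)
          + ASect a s' x i (α - Finsupp.single i 1)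
    rw [nablaPrimeS_congr (fun z γ hγ => h γ (by rw [hγ]; exact hβ) z) x i,
      ASect_congr ha2 (fun z γ hγ => h γ (lt_trans hγ hβ) z) x i]
  · rw [if_neg hi, if_neg hi]

/-! ### existence and uniqueness of the recursion solution -/

def solN (Γ : Christoffel d) (a : ACoeff d) (s₀ : E d → ℝ) : ℕ → SCoeff d
  | 0 => fun x α => if α = 0 then s₀ x else 0
  | (n+1) => fun x α => (if α = 0 then s₀ x else 0)
      + deltaInvS (fun z i β => nablaPrimeS Γ (solN Γ a s₀ n) z i β
          + ASect a (solN Γ a s₀ n) z i β) x α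

lemma solN_succ_eq {Γ : Christoffel d} {a : ACoeff d}
    (ha2 : ∀ x i k β, mdeg β ≤ 1 → a x i k β = 0) (s₀ : E d → ℝ) :
    ∀ n α, mdeg α ≤ n → ∀ x, solN Γ a s₀ (n+1) x α = solN Γ a s₀ n x α := by
  intro n
  induction n with
  | zero =>
    intro α hα x
    have h0 : α = 0 := mdeg_eq_zero.mp (Nat.le_zero.mp hα)
    subst h0
    show (if (0:MIdx d) = 0 then s₀ x else 0) + _ = _
    rw [deltaInvS_zero, add_zero]
    rfl
  | succ n ih =>
    intro α hα x
    show (if α = 0 then s₀ x else 0) + _ = (if α = 0 then s₀ x else 0) + _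
    congr 1
    exact deltaInvS_congr ha2 (fun β hβ z => ih β (by omega) z) x

lemma solN_stable {Γ : Christoffel d} {a : ACoeff d}
    (ha2 : ∀ x i k β, mdeg β ≤ 1 → a x i k β = 0) (s₀ : E d → ℝ) :
    ∀ k n α, mdeg α ≤ n → ∀ x, solN Γ a s₀ (n + k) x α = solN Γ a s₀ n x α := by
  intro k
  induction k with
  | zero => intro n α hα x; rfl
  | succ k ih =>
    intro n α hα x
    have h1 : solN Γ a s₀ (n + k + 1) x α = solN Γ a s₀ (n + k) x α :=
      solN_succ_eq ha2 s₀ (n + k) α (by omega) x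
    rw [show n + (k+1) = n + k + 1 from rfl, h1, ih n α hα x]

def sol (Γ : Christoffel d) (a : ACoeff d) (s₀ : E d → ℝ) : SCoeff d :=
  fun x α => solN Γ a s₀ (mdeg α) x α

lemma sol_rec {Γ : Christoffel d} {a : ACoeff d}
    (ha2 : ∀ x i k β, mdeg β ≤ 1 → a x i k β = 0) (s₀ : E d → ℝ) :
    RecEq Γ a s₀ (sol Γ a s₀) := by
  intro x α
  have h1 : sol Γ a s₀ x α = solN Γ a s₀ (mdeg α + 1) x α :=
    (solN_succ_eq ha2 s₀ (mdeg α) α le_rfl x).symm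
  rw [h1]
  show (if α = 0 then s₀ x else 0) + _ = (if α = 0 then s₀ x else 0) + _
  congr 1
  apply deltaInvS_congr ha2 (fun β hβ z => ?_) x
  show solN Γ a s₀ (mdeg α) z β = sol Γ a s₀ z β
  have h2 : mdeg α = mdeg β + (mdeg α - mdeg β) := by omega
  rw [show sol Γ a s₀ z β = solN Γ a s₀ (mdeg β) z β from rfl, h2]
  exact solN_stable ha2 s₀ (mdeg α - mdeg β) (mdeg β) β le_rfl z

lemma rec_unique {Γ : Christoffel d} {a : ACoeff d}
    (ha2 : ∀ x i k β, mdeg β ≤ 1 → a x i k β = 0) {s₀ : E d → ℝ} {s s' : SCoeff d}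
    (h1 : RecEq Γ a s₀ s) (h2 : RecEq Γ a s₀ s') : s = s' := by
  have main : ∀ n α, mdeg α = n → ∀ x, s x α = s' x α := by
    intro n
    induction n using Nat.strong_induction_on with
    | _ n ih =>
      intro α hα x
      rw [h1 x α, h2 x α]
      congr 1
      exact deltaInvS_congr ha2 (fun β hβ z => ih (mdeg β) (by omega) β rfl z) x
  funext x α
  exact main (mdeg α) α rfl x

/-! ### smoothness of solutions of the recursion -/

lemma contDiff_nablaPrimeS' {Γ : Christoffel d} (hΓ : SmoothChristoffel Γ) {s : SCoeff d}
    {β : MIdx d} (hs : ∀ γ, mdeg γ = mdeg β → ContDiff ℝ (⊤ : ℕ∞) (fun x => s x γ)) (i : Fin d) :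
    ContDiff ℝ (⊤ : ℕ∞) (fun x => nablaPrimeS Γ s x i β) := by
  unfold nablaPrimeS
  apply ContDiff.sub
  · exact contDiff_pd (hs β rfl)
  · apply ContDiff.sum; intro m _
    apply ContDiff.sum; intro l _
    by_cases hl : 0 < β l
    · simp only [if_pos hl]
      have hm : mdeg (β - Finsupp.single l 1 + Finsupp.single m 1) = mdeg β := by
        rw [mdeg_add, mdeg_single]
        have := mdeg_sub_single hl
        omega
      exact ((hΓ m i l).mul contDiff_const).mul (hs _ hm)
    · simp only [if_neg hl]
      exact contDiff_const

lemma contDiff_ASect' {a : ACoeff d} (ha : SmoothACoeff a)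
    (ha2 : ∀ x i k β, mdeg β ≤ 1 → a x i k β = 0) {s : SCoeff d} {β : MIdx d}
    (hs : ∀ γ, mdeg γ < mdeg β → ContDiff ℝ (⊤ : ℕ∞) (fun x => s x γ)) (i : Fin d) :
    ContDiff ℝ (⊤ : ℕ∞) (fun x => ASect a s x i β) := by
  unfold ASect
  apply ContDiff.sum; intro k _
  apply ContDiff.sum; intro uv hm
  rw [Finset.HasAntidiagonal.mem_antidiagonal] at hm
  by_cases hu : mdeg uv.1 ≤ 1
  · have hz : (fun x => a x i k uv.1 * ((uv.2 k : ℝ) + 1) * s x (uv.2 + Finsupp.single k 1))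
        = fun _ => (0:ℝ) := by
      funext x
      rw [ha2 x i k uv.1 hu, zero_mul, zero_mul]
    rw [hz]
    exact contDiff_const
  · have hdeg : mdeg (uv.2 + Finsupp.single k 1) < mdeg β := by
      have hadd : mdeg uv.1 + mdeg uv.2 = mdeg β := by rw [← mdeg_add, hm]
      rw [mdeg_add, mdeg_single]
      omega
    exact ((ha i k uv.1).mul contDiff_const).mul (hs _ hdeg)

lemma rec_smooth {Γ : Christoffel d} (hΓ : SmoothChristoffel Γ) {a : ACoeff d}
    (ha : SmoothACoeff a) (ha2 : ∀ x i k β, mdeg β ≤ 1 → a x i k β = 0)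
    {s₀ : E d → ℝ} (hs₀ : ContDiff ℝ (⊤ : ℕ∞) s₀) {s : SCoeff d} (hrec : RecEq Γ a s₀ s) :
    ∀ γ, ContDiff ℝ (⊤ : ℕ∞) (fun x => s x γ) := by
  have main : ∀ n γ, mdeg γ = n → ContDiff ℝ (⊤ : ℕ∞) (fun x => s x γ) := by
    intro n
    induction n using Nat.strong_induction_on with
    | _ n ih =>
      intro γ hγ
      have heq : (fun x => s x γ) = fun x => (if γ = 0 then s₀ x else 0)
          + deltaInvS (fun z i β => nablaPrimeS Γ s z i β + ASect a s z i β) x γ :=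
        funext fun x => hrec x γ
      rw [heq]
      apply ContDiff.add
      · by_cases h : γ = 0
        · simp only [if_pos h]; exact hs₀
        · simp only [if_neg h]; exact contDiff_const
      · unfold deltaInvS
        apply ContDiff.mul contDiff_const
        apply ContDiff.sum; intro i _
        by_cases hi : 0 < γ i
        · simp only [if_pos hi]
          have hβ : mdeg (γ - Finsupp.single i 1) < n := by
            have := mdeg_sub_single hi
            omega
          apply ContDiff.add
          · exact contDiff_nablaPrimeS' hΓ
              (fun γ' hγ' => ih (mdeg γ') (by omega) γ' rfl) i
          · exact contDiff_ASect' ha ha2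
              (fun γ' hγ' => ih (mdeg γ') (by omega) γ' rfl) i
        · simp only [if_neg hi]
          exact contDiff_const
  exact fun γ => main (mdeg γ) γ rfl

/-! ### part 2: flatness of recursion solutions -/

lemma flat_of_recEq {Γ : Christoffel d} (hΓ : SmoothChristoffel Γ) (hT : Torsionfree Γ)
    {a : ACoeff d} (ha : SmoothACoeff a) (ha2 : ∀ x i k β, mdeg β ≤ 1 → a x i k β = 0)
    (hF : FlatEq Γ a) {s₀ : E d → ℝ} {s : SCoeff d}
    (hs : ∀ γ, ContDiff ℝ (⊤ : ℕ∞) (fun x => s x γ)) (hrec : RecEq Γ a s₀ s) :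
    FlatSec Γ a s := by
  have hs0 : ∀ z, s z 0 = s₀ z := by
    intro z
    have := hrec z 0
    rwa [if_pos rfl, deltaInvS_zero, add_zero] at this
  have hF1 : ∀ z α, (∑ j, if 0 < α j then
      (deltaS s z j (α - Finsupp.single j 1) - nablaPrimeS Γ s z j (α - Finsupp.single j 1)
        - ASect a s z j (α - Finsupp.single j 1)) else 0) = 0 := by
    intro z α
    by_cases h : α = 0
    · subst h
      apply Finset.sum_eq_zero; intro j _
      rw [if_neg]
      simp
    · have hm : mdeg α ≠ 0 := fun hc => h (mdeg_eq_zero.mp hc)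
      have hm' : ((mdeg α : ℕ) : ℝ) ≠ 0 := Nat.cast_ne_zero.mpr hm
      have e2 : deltaInvS (fun w i β => nablaPrimeS Γ s w i β + ASect a s w i β) z α
          = s z α := by
        have := hrec z α
        rw [if_neg h, zero_add] at this
        exact this.symm
      have e1 : deltaInvS (fun w i β => deltaS s w i β) z α = s z α := by
        rw [deltaInv_deltaS, if_neg h, sub_zero]
      have hsplit : (∑ j, if 0 < α j then
          (deltaS s z j (α - Finsupp.single j 1) - nablaPrimeS Γ s z j (α - Finsupp.single j 1)
            - ASect a s z j (α - Finsupp.single j 1)) else 0)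
          = (∑ j, if 0 < α j then deltaS s z j (α - Finsupp.single j 1) else 0)
            - (∑ j, if 0 < α j then (nablaPrimeS Γ s z j (α - Finsupp.single j 1)
                + ASect a s z j (α - Finsupp.single j 1)) else 0) := by
        rw [← Finset.sum_sub_distrib]
        apply Finset.sum_congr rfl; intro j _
        by_cases hj : 0 < α j <;> simp [hj] <;> ring
      rw [hsplit]
      have c1 : (1 / ((mdeg α : ℕ) : ℝ)) * (∑ j, if 0 < α j then
          deltaS s z j (α - Finsupp.single j 1) else 0) = s z α := e1
      have c2 : (1 / ((mdeg α : ℕ) : ℝ)) * (∑ j, if 0 < α j then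
          (nablaPrimeS Γ s z j (α - Finsupp.single j 1)
            + ASect a s z j (α - Finsupp.single j 1)) else 0) = s z α := e2
      have hc := c1.trans c2.symm
      have := mul_left_cancel₀ (one_div_ne_zero hm') hc
      rw [this, sub_self]
  have main : ∀ n α, mdeg α = n → ∀ z r,
      deltaS s z r α - nablaPrimeS Γ s z r α - ASect a s z r α = 0 := by
    intro n
    induction n using Nat.strong_induction_on with
    | _ n ih =>
      intro α hα z r
      have hcomb := comb (fun q γ => deltaS s z q γ - nablaPrimeS Γ s z q γ
        - ASect a s z q γ) α r
      have hS1 : (∑ j, if 0 < α j then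
          (((α - Finsupp.single j 1 : MIdx d) j : ℝ) + 1)
            * ((fun q γ => deltaS s z q γ - nablaPrimeS Γ s z q γ - ASect a s z q γ) r
                (α - Finsupp.single j 1 + Finsupp.single j 1))
          - (((α - Finsupp.single j 1 : MIdx d) r : ℝ) + 1)
            * ((fun q γ => deltaS s z q γ - nablaPrimeS Γ s z q γ - ASect a s z q γ) j
                (α - Finsupp.single j 1 + Finsupp.single r 1))
          else 0) = 0 := by
        apply Finset.sum_eq_zero; intro j _
        by_cases hj : 0 < α j
        · rw [if_pos hj]
          have hk := key hΓ hT ha hF hs z j r (α - Finsupp.single j 1)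
          have hβ : mdeg (α - Finsupp.single j 1) < n := by
            have := mdeg_sub_single hj
            omega
          have hv1 : nablaPrimeS Γ (fun w γ => deltaS s w r γ - nablaPrimeS Γ s w r γ
              - ASect a s w r γ) z j (α - Finsupp.single j 1) = 0 :=
            nablaPrimeS_vanish (fun w γ hγ => ih (mdeg γ) (by omega) γ rfl w r) z j
          have hv2 : nablaPrimeS Γ (fun w γ => deltaS s w j γ - nablaPrimeS Γ s w j γ
              - ASect a s w j γ) z r (α - Finsupp.single j 1) = 0 :=
            nablaPrimeS_vanish (fun w γ hγ => ih (mdeg γ) (by omega) γ rfl w j) z r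
          have hv3 : ASect a (fun w γ => deltaS s w r γ - nablaPrimeS Γ s w r γ
              - ASect a s w r γ) z j (α - Finsupp.single j 1) = 0 :=
            ASect_vanish ha2 (fun w γ hγ => ih (mdeg γ) (by omega) γ rfl w r) z j
          have hv4 : ASect a (fun w γ => deltaS s w j γ - nablaPrimeS Γ s w j γ
              - ASect a s w j γ) z r (α - Finsupp.single j 1) = 0 :=
            ASect_vanish ha2 (fun w γ hγ => ih (mdeg γ) (by omega) γ rfl w j) z r
          linear_combination hk + hv1 - hv2 + hv3 - hv4
        · rw [if_neg hj]
      have hS2 := hF1 z (α + Finsupp.single r 1)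
      have hfin : ((mdeg α : ℝ) + 1) * (deltaS s z r α - nablaPrimeS Γ s z r α
          - ASect a s z r α) = 0 := by
        linear_combination hcomb + hS1 + ((α r : ℝ) + 1) * hS2
      have hne : ((mdeg α : ℝ) + 1) ≠ 0 := by positivity
      exact (mul_eq_zero.mp hfin).resolve_left hne
  intro x i α
  have := main (mdeg α) α rfl x i
  unfold DFSect
  linear_combination -this

/-! ### part 3: flat sections satisfy the recursion -/

lemma rec_of_flat {Γ : Christoffel d} {a : ACoeff d} {s : SCoeff d}
    (hfl : FlatSec Γ a s) : RecEq Γ a (fun x => s x 0) s := by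
  intro x α
  have hkey : ∀ z (i : Fin d) β, nablaPrimeS Γ s z i β + ASect a s z i β = deltaS s z i β := by
    intro z i β
    have := hfl z i β
    unfold DFSect at this
    linear_combination this
  have heq : deltaInvS (fun z i β => nablaPrimeS Γ s z i β + ASect a s z i β) x α
      = deltaInvS (fun z i β => deltaS s z i β) x α := by
    unfold deltaInvS
    congr 1
    apply Finset.sum_congr rfl; intro i _
    by_cases h : 0 < α i
    · rw [if_pos h, if_pos h]
      exact hkey x i _
    · rw [if_neg h, if_neg h]
  rw [heq, deltaInv_deltaS]
  ring

end Aux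


theorem flat_sections_determined_by_recursion
    (d : ℕ) (Γ : Christoffel d) (hΓ : SmoothChristoffel Γ) (hT : Torsionfree Γ)
    (a : ACoeff d) (ha : SmoothACoeff a)
    (ha2 : ∀ x i k β, mdeg β ≤ 1 → a x i k β = 0) :
    -- the recursion has a unique solution for any degree-0 part s₀ …
    (∀ s₀ : E d → ℝ, ContDiff ℝ (⊤ : ℕ∞) s₀ → ∃! s : SCoeff d, RecEq Γ a s₀ s) ∧
    -- … which is flat whenever (D_F)² = 0 holds …
    (FlatEq Γ a → ∀ (s₀ : E d → ℝ), ContDiff ℝ (⊤ : ℕ∞) s₀ →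
      ∀ s : SCoeff d, RecEq Γ a s₀ s → FlatSec Γ a s) ∧
    -- … and every flat section satisfies the recursion with its own degree-0 part,
    -- hence is uniquely determined by it
    (∀ s : SCoeff d, FlatSec Γ a s → RecEq Γ a (fun x => s x 0) s) := by
  refine ⟨?_, ?_, ?_⟩
  · intro s₀ hs₀
    exact ⟨Aux.sol Γ a s₀, Aux.sol_rec ha2 s₀,
      fun s' hs' => Aux.rec_unique ha2 hs' (Aux.sol_rec ha2 s₀)⟩
  · intro hF s₀ hs₀ s hrec
    exact Aux.flat_of_recEq hΓ hT ha ha2 hF (Aux.rec_smooth hΓ ha ha2 hs₀ hrec) hrec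
  · intro s hfl
    exact Aux.rec_of_flat hfl
end
end
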